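/- arXiv:1702.08903 — 8 statements merged into one kernel-verified Lean document; each statement's English description precedes it below -/
import Mathlib

section
/- Let ≤ be a tree order on a finite set V, let G be its comparability graph, and let c be any coloring of V. If v < x and c(v) = c(x), then the deficiency of v under c is at most the deficiency of x under c. -/
/-- The deficiency of a vertex `v` under a coloring `c`: the number of neighbors
of `v` whose color equals `c v`. -/
noncomputable def deficiency {V α : Type*} (G : SimpleGraph V) (c : V → α) (v : V) : ℕ :=
  {w | G.Adj v w ∧ c w = c v}.ncard

/-- `c` is a `(C,D)`-coloring (with colors `Fin C`): every vertex has at most `D`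
neighbors of its own color. -/
def IsDefColoring {V α : Type*} (G : SimpleGraph V) (D : ℕ) (c : V → α) : Prop :=
  ∀ v, deficiency G c v ≤ D

/-- A partial order is a tree order if every up-set `{w | v ≤ w}` is a chain. -/
def IsTreeOrder (V : Type*) [PartialOrder V] : Prop :=
  ∀ v : V, IsChain (· ≤ ·) {w | v ≤ w}

/-- The comparability graph of a partial order: `u` and `v` are adjacent iff they are
distinct and comparable. -/
def compGraph (V : Type*) [PartialOrder V] : SimpleGraph V where
  Adj u v := u ≠ v ∧ (u ≤ v ∨ v ≤ u)
  symm := by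
    constructor
    intro u v h
    exact ⟨h.1.symm, h.2.symm⟩
  loopless := by
    constructor
    intro v h
    exact h.1 rfl

/-!
The transposition of `v` and `x` maps the neighbours of `v` of colour `c v` injectively into the
neighbours of `x` of colour `c x`: the neighbour `x` of `v` goes to `v`, and every other neighbour
`w` of `v` is already a neighbour of `x`, since either `w < v < x`, or `w` and `x` both lie in the
up-set of `v`, which is a chain.
-/

theorem IsTreeOrder.le_or_le_of_le {V : Type*} [PartialOrder V] (htree : IsTreeOrder V)
    {v w x : V} (hvw : v ≤ w) (hvx : v ≤ x) : w ≤ x ∨ x ≤ w := by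
  rcases eq_or_ne w x with rfl | hwx
  · exact Or.inl le_rfl
  · exact htree v hvw hvx hwx

theorem IsTreeOrder.compGraph_adj_of_lt_of_adj {V : Type*} [PartialOrder V]
    (htree : IsTreeOrder V) {v w x : V} (hvx : v < x) (hvw : (compGraph V).Adj v w)
    (hwx : w ≠ x) : (compGraph V).Adj x w := by
  refine ⟨hwx.symm, ?_⟩
  rcases hvw.2 with hvw | hwv
  · exact htree.le_or_le_of_le hvx.le hvw
  · exact Or.inr (hwv.trans hvx.le)

/-- In the comparability graph of a tree order, if `v < x` and `c v = c x` then the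
deficiency of `v` under `c` is at most the deficiency of `x` under `c`. -/
theorem stmt4 {V : Type*} [Fintype V] [PartialOrder V] (htree : IsTreeOrder V)
    {α : Type*} (c : V → α) (v x : V) (hvx : v < x) (hcol : c v = c x) :
    deficiency (compGraph V) c v ≤ deficiency (compGraph V) c x := by
  classical
  have hmaps : ∀ w ∈ {w | (compGraph V).Adj v w ∧ c w = c v},
      Equiv.swap v x w ∈ {w | (compGraph V).Adj x w ∧ c w = c x} := by
    rintro w ⟨hvw, hcw⟩
    by_cases hwx : w = x
    · subst hwx
      rw [Equiv.swap_apply_right]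
      exact ⟨hvw.symm, hcol⟩
    · rw [Equiv.swap_apply_of_ne_of_ne ((compGraph V).ne_of_adj hvw).symm hwx]
      exact ⟨htree.compGraph_adj_of_lt_of_adj hvx hvw hwx, hcw.trans hcol⟩
  exact Set.ncard_le_ncard_of_injOn _ hmaps (Equiv.swap v x).injective.injOn
end

section
/- Let ≤ be a tree order on a finite set V, let G be its comparability graph, and let C ≥ 1, D ≥ 0 be integers. If G admits a (C,D)-coloring, then G admits a (C,D)-coloring c that is monotone with respect to ≤, i.e., v ≤ u implies c(v) ≤ c(u). -/
/-!
Let `S 0 = V` and let `S (i + 1)` be the set of vertices with more than `D` strict descendants in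
`S i`. These sets are up-closed, so coloring `v` by the largest `i` with `v ∈ S i` is monotone; it
is `D`-defective because in a tree order it suffices that no vertex has more than `D` strict
descendants of its own color. It remains to see that `S C = ∅` when a `(C, D)`-coloring `c` exists.
Each `v ∈ S i` sees at least `i + 1` colors of `c` below it; for the induction this is
strengthened to `i + 1` colors outside any set `F` of colors that is carried by fewer vertices
`≤ v` than there are vertices `≤ v` in `S i`. The descendant to recurse on is found by
pigeonhole over the maximal elements of a set, whose down-sets are disjoint in a tree order.
-/

open Finset

section

open Classical

variable {V α : Type*}

lemma deficiency_eq_card [Fintype V] (G : SimpleGraph V) (c : V → α) (v : V) :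
    deficiency G c v = #{w | G.Adj v w ∧ c w = c v} := by
  rw [deficiency, ← Set.ncard_coe_finset, coe_filter_univ]

variable [PartialOrder V]

lemma card_filter_le_eq_card_filter_lt_add_one {s : Finset V} {v : V} (hv : v ∈ s) :
    #{w ∈ s | w ≤ v} = #{w ∈ s | w < v} + 1 := by
  rw [← card_insert_of_notMem (a := v) (s := {w ∈ s | w < v}) (by simp)]
  congr 1
  ext w
  simp only [mem_filter, mem_insert, le_iff_lt_or_eq]
  aesop

lemma IsTreeOrder.exists_card_filter_le_lt (htree : IsTreeOrder V) {S T : Finset V}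
    (hST : #S < #T) : ∃ z ∈ T, #{w ∈ S | w ≤ z} < #{w ∈ T | w ≤ z} := by
  by_contra! h
  set M := {z ∈ T | Maximal (· ∈ T) z}
  have hcover : T ⊆ M.biUnion fun z => {w ∈ T | w ≤ z} := by
    intro t ht
    obtain ⟨z, htz, hz⟩ := T.exists_le_maximal ht
    exact mem_biUnion.2 ⟨z, mem_filter.2 ⟨hz.prop, hz⟩, mem_filter.2 ⟨ht, htz⟩⟩
  have hdisj : (M : Set V).PairwiseDisjoint fun z => {w ∈ S | w ≤ z} := by
    intro a ha b hb hab
    simp only [M, coe_filter, Set.mem_ofPred_eq] at ha hb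
    refine disjoint_left.2 fun w hwa hwb => hab ?_
    rcases (htree _).total (mem_filter.1 hwa).2 (mem_filter.1 hwb).2 with hle | hle
    exacts [ha.2.eq_of_le hb.1 hle, (hb.2.eq_of_le ha.1 hle).symm]
  have : #T ≤ #S := calc
    #T ≤ ∑ z ∈ M, #{w ∈ T | w ≤ z} := (card_le_card hcover).trans card_biUnion_le
    _ ≤ ∑ z ∈ M, #{w ∈ S | w ≤ z} := sum_le_sum fun z hz => h z (mem_filter.1 hz).1
    _ = #(M.biUnion fun z => {w ∈ S | w ≤ z}) := (card_biUnion hdisj).symm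
    _ ≤ #S := card_le_card (biUnion_subset.2 fun z _ => filter_subset _ _)
  omega

lemma IsTreeOrder.exists_lt_card_filter_le_lt (htree : IsTreeOrder V) {S T : Finset V} {v : V}
    (hST : #{w ∈ S | w < v} < #{w ∈ T | w < v}) :
    ∃ z ∈ T, z < v ∧ #{w ∈ S | w ≤ z} < #{w ∈ T | w ≤ z} := by
  obtain ⟨z, hz, hlt⟩ := htree.exists_card_filter_le_lt hST
  obtain ⟨hzT, hzv⟩ := mem_filter.1 hz
  have hbelow (s : Finset V) : {w ∈ {w ∈ s | w < v} | w ≤ z} = {w ∈ s | w ≤ z} := by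
    rw [filter_filter]
    exact filter_congr fun w _ => ⟨fun h => h.2, fun h => ⟨h.trans_lt hzv, h⟩⟩
  rw [hbelow, hbelow] at hlt
  exact ⟨z, hzT, hzv, hlt⟩

variable [Fintype V] {D : ℕ} {c : V → α}

/-- The same-colored neighbours of `v` all lie below the highest vertex of `v`'s color above `v`. -/
lemma IsTreeOrder.isDefColoring_compGraph_iff (htree : IsTreeOrder V) :
    IsDefColoring (compGraph V) D c ↔ ∀ v, #{w ∈ {u | c u = c v} | w < v} ≤ D := by
  simp only [IsDefColoring, deficiency_eq_card]
  constructor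
  · intro h v
    refine (card_le_card fun w hw => ?_).trans (h v)
    simp only [mem_filter, mem_univ, true_and] at hw ⊢
    exact ⟨⟨hw.2.ne', Or.inr hw.2.le⟩, hw.1⟩
  · intro h v
    obtain ⟨t, hvt, ht⟩ := exists_le_maximal ({u | c u = c v} : Finset V) (a := v) (by simp)
    have hct : c t = c v := by simpa using ht.prop
    calc #{w | (compGraph V).Adj v w ∧ c w = c v}
        ≤ #(({w ∈ {u | c u = c t} | w ≤ t} : Finset V).erase v) := card_le_card fun w hw => ?_
      _ = #{w ∈ {u | c u = c t} | w < t} := by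
          rw [card_erase_of_mem (by simp [hct, hvt]), card_filter_le_eq_card_filter_lt_add_one
            (by simp), Nat.add_sub_cancel]
      _ ≤ D := h t
    obtain ⟨⟨hne, hcmp⟩, hcw⟩ : (compGraph V).Adj v w ∧ c w = c v := by simpa using hw
    refine mem_erase.2 ⟨hne.symm, mem_filter.2 ⟨by simp [hct, hcw], ?_⟩⟩
    rcases hcmp with hvw | hwv
    · rcases (htree _).total hvw hvt with hwt | htw
      exacts [hwt, ht.2 (by simp [hcw]) htw]
    · exact hwv.trans hvt

variable (V D) in
noncomputable def heavySet : ℕ → Finset V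
  | 0 => univ
  | i + 1 => {v | D < #{w ∈ heavySet i | w < v}}

lemma mem_heavySet_succ {i : ℕ} {v : V} :
    v ∈ heavySet V D (i + 1) ↔ D < #{w ∈ heavySet V D i | w < v} := by
  simp [heavySet]

lemma mem_heavySet_of_le {i : ℕ} {v u : V} (hv : v ∈ heavySet V D i) (hvu : v ≤ u) :
    u ∈ heavySet V D i := by
  cases i with
  | zero => simp [heavySet]
  | succ i =>
    rw [mem_heavySet_succ] at hv ⊢
    refine hv.trans_le (card_le_card fun w hw => ?_)
    simp only [mem_filter] at hw ⊢
    exact ⟨hw.1, hw.2.trans_le hvu⟩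

lemma heavySet_succ_subset (i : ℕ) : heavySet V D (i + 1) ⊆ heavySet V D i := by
  intro v hv
  obtain ⟨w, hw⟩ := card_pos.1 ((Nat.zero_le D).trans_lt (mem_heavySet_succ.1 hv))
  obtain ⟨hwS, hwv⟩ := mem_filter.1 hw
  exact mem_heavySet_of_le hwS hwv.le

/-- The strict descendants in `heavySet V D i` of a minimal `u ≤ v` in `heavySet V D (i + 1)` are
more than `D` and lie outside `heavySet V D (i + 1)`. -/
lemma card_filter_heavySet_succ_add_lt {i : ℕ} {v : V} (hv : v ∈ heavySet V D (i + 1)) :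
    #{w ∈ heavySet V D (i + 1) | w < v} + D < #{w ∈ heavySet V D i | w < v} := by
  obtain ⟨u, -, hu⟩ :=
    exists_le_minimal ({w ∈ heavySet V D (i + 1) | w ≤ v} : Finset V) (a := v) (by simp [hv])
  obtain ⟨huS, huv⟩ := mem_filter.1 hu.prop
  have hdisj : Disjoint {w ∈ heavySet V D (i + 1) | w < v} {w ∈ heavySet V D i | w < u} :=
    disjoint_left.2 fun w hw hw' => by
      obtain ⟨hwS, hwv⟩ := mem_filter.1 hw
      exact hu.not_lt (mem_filter.2 ⟨hwS, hwv.le⟩) (mem_filter.1 hw').2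
  have hsub : {w ∈ heavySet V D (i + 1) | w < v} ∪ {w ∈ heavySet V D i | w < u} ⊆
      {w ∈ heavySet V D i | w < v} := by
    intro w hw
    rcases mem_union.1 hw with hw | hw <;> obtain ⟨hwS, hw⟩ := mem_filter.1 hw
    · exact mem_filter.2 ⟨heavySet_succ_subset i hwS, hw⟩
    · exact mem_filter.2 ⟨hwS, hw.trans_le huv⟩
  have := card_le_card hsub
  rw [card_union_of_disjoint hdisj] at this
  have := mem_heavySet_succ.1 huS
  omega

lemma card_filter_insert_lt_card_filter_heavySet (htree : IsTreeOrder V)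
    (hc : IsDefColoring (compGraph V) D c) {i : ℕ} {v : V} (hv : v ∈ heavySet V D (i + 1))
    {F : Finset α}
    (hF : #{w ∈ {u | c u ∈ F} | w ≤ v} < #{w ∈ heavySet V D (i + 1) | w ≤ v}) :
    #{w ∈ {u | c u ∈ insert (c v) F} | w < v} < #{w ∈ heavySet V D i | w < v} := by
  have hsub : ({w ∈ {u | c u ∈ insert (c v) F} | w < v} : Finset V) ⊆
      ({w ∈ {u | c u = c v} | w < v} : Finset V) ∪
        ({w ∈ {u | c u ∈ F} | w ≤ v} : Finset V) := by
    intro w hw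
    simp only [mem_filter, mem_univ, true_and, mem_insert, mem_union] at hw ⊢
    rcases hw with ⟨hcw | hcw, hwv⟩
    exacts [Or.inl ⟨hcw, hwv⟩, Or.inr ⟨hcw, hwv.le⟩]
  have hsame := htree.isDefColoring_compGraph_iff.1 hc v
  have hlayer := card_filter_heavySet_succ_add_lt hv
  rw [card_filter_le_eq_card_filter_lt_add_one hv] at hF
  have := (card_le_card hsub).trans (card_union_le _ _)
  omega

/-- Induction on `i`, then on `v`: if `c v ∈ F`, recurse to a descendant in the same heavy set,
otherwise forbid `c v` as well and recurse to a descendant one level lower; the pigeonhole lemma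
supplies the descendant. -/
theorem lt_card_image_filter_le_sdiff (htree : IsTreeOrder V)
    (hc : IsDefColoring (compGraph V) D c) {i : ℕ} {v : V} (hv : v ∈ heavySet V D i)
    {F : Finset α} (hF : #{w ∈ {u | c u ∈ F} | w ≤ v} < #{w ∈ heavySet V D i | w ≤ v}) :
    i < #(image c {w | w ≤ v} \ F) := by
  induction i generalizing v F with
  | zero =>
    obtain ⟨w, hw, hwF⟩ := exists_mem_notMem_of_card_lt_card hF
    simp only [heavySet, mem_filter, mem_univ, true_and] at hw hwF
    refine card_pos.2 ⟨c w, mem_sdiff.2 ⟨mem_image_of_mem c (by simpa using hw), ?_⟩⟩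
    exact fun h => hwF ⟨h, hw⟩
  | succ i ih =>
    induction v using WellFoundedLT.induction generalizing F with
    | ind v ihv =>
    by_cases hcv : c v ∈ F
    · rw [card_filter_le_eq_card_filter_lt_add_one (by simpa),
        card_filter_le_eq_card_filter_lt_add_one hv, add_lt_add_iff_right] at hF
      obtain ⟨z, hz, hzv, hFz⟩ := htree.exists_lt_card_filter_le_lt hF
      refine (ihv z hzv hz hFz).trans_le (card_le_card (sdiff_subset_sdiff
        (image_subset_image fun w hw => ?_) le_rfl))
      simp only [mem_filter, mem_univ, true_and] at hw ⊢
      exact hw.trans hzv.le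
    · have hFv := card_filter_insert_lt_card_filter_heavySet htree hc hv hF
      obtain ⟨z, hz, hzv, hFz⟩ := htree.exists_lt_card_filter_le_lt hFv
      have hsub : insert (c v) (image c {w | w ≤ z} \ insert (c v) F) ⊆
          image c {w | w ≤ v} \ F := by
        intro a ha
        simp only [mem_insert, mem_sdiff, mem_image, mem_filter, mem_univ, true_and] at ha ⊢
        rcases ha with rfl | ⟨⟨w, hwz, rfl⟩, hwF⟩
        · exact ⟨⟨v, le_rfl, rfl⟩, hcv⟩
        · exact ⟨⟨w, hwz.trans hzv.le, rfl⟩, fun h => hwF (Or.inr h)⟩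
      have := card_le_card hsub
      rw [card_insert_of_notMem (by simp)] at this
      have := ih hz hFz
      omega

theorem heavySet_fintypeCard_eq_empty [Fintype α] (htree : IsTreeOrder V)
    (hc : IsDefColoring (compGraph V) D c) : heavySet V D (Fintype.card α) = ∅ := by
  refine eq_empty_of_forall_notMem fun v hv => ?_
  have hpos : 0 < #{w ∈ heavySet V D (Fintype.card α) | w ≤ v} :=
    card_pos.2 ⟨v, mem_filter.2 ⟨hv, le_rfl⟩⟩
  have := lt_card_image_filter_le_sdiff htree hc hv (F := ∅) (by simpa using hpos)
  exact (this.trans_le (card_le_univ _)).false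

variable (D) in
noncomputable def heavyLevel (n : ℕ) (v : V) : ℕ :=
  Nat.findGreatest (fun i => v ∈ heavySet V D i) n

lemma mem_heavySet_heavyLevel (n : ℕ) (v : V) : v ∈ heavySet V D (heavyLevel D n v) :=
  Nat.findGreatest_spec (P := fun i => v ∈ heavySet V D i) (Nat.zero_le n) (by simp [heavySet])

lemma heavyLevel_lt {n : ℕ} (hn : heavySet V D n = ∅) (v : V) : heavyLevel D n v < n := by
  refine (Nat.findGreatest_le n).lt_of_ne fun h : heavyLevel D n v = n => ?_
  have hv := mem_heavySet_heavyLevel (D := D) n v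
  rw [h, hn] at hv
  exact notMem_empty v hv

lemma notMem_heavySet_heavyLevel_succ {n : ℕ} (hn : heavySet V D n = ∅) (v : V) :
    v ∉ heavySet V D (heavyLevel D n v + 1) :=
  Nat.findGreatest_is_greatest (Nat.lt_succ_self _) (heavyLevel_lt hn v)

lemma heavyLevel_mono (n : ℕ) : Monotone (heavyLevel D n : V → ℕ) := fun v _ hvu =>
  Nat.le_findGreatest (Nat.findGreatest_le n)
    (mem_heavySet_of_le (mem_heavySet_heavyLevel n v) hvu)

lemma card_filter_heavyLevel_eq_lt_le {n : ℕ} (hn : heavySet V D n = ∅) (v : V) :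
    #{w ∈ {u | heavyLevel D n u = heavyLevel D n v} | w < v} ≤ D := by
  refine (card_le_card fun w hw => ?_).trans
    (not_lt.1 (mem_heavySet_succ.not.1 (notMem_heavySet_heavyLevel_succ hn v)))
  simp only [mem_filter, mem_univ, true_and] at hw
  exact mem_filter.2 ⟨hw.1 ▸ mem_heavySet_heavyLevel n w, hw.2⟩

end

/-- If the comparability graph of a tree order admits a `(C,D)`-coloring, then it admits
one that is monotone with respect to the order. -/
theorem stmt5 {V : Type*} [Fintype V] [PartialOrder V] (htree : IsTreeOrder V)
    (C D : ℕ) (h : ∃ c : V → Fin C, IsDefColoring (compGraph V) D c) :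
    ∃ c : V → Fin C, IsDefColoring (compGraph V) D c ∧
      ∀ u v : V, v ≤ u → c v ≤ c u := by
  obtain ⟨c, hc⟩ := h
  have hC : heavySet V D C = ∅ := Fintype.card_fin C ▸ heavySet_fintypeCard_eq_empty htree hc
  refine ⟨fun v => ⟨heavyLevel D C v, heavyLevel_lt hC v⟩, ?_,
    fun _ _ hvu => heavyLevel_mono C hvu⟩
  refine htree.isDefColoring_compGraph_iff.2 fun v => ?_
  simpa only [Fin.mk.injEq] using card_filter_heavyLevel_eq_lt_le hC v
end

section
/- Let ≤ be a tree order on a finite set V, let G be its comparability graph, and let c : V → {1,…,C} be a coloring such that every vertex u has at most D strict descendants v (i.e., v < u) with c(v) = c(u). Then c is a (C,D)-coloring of G, i.e., every vertex has at most D neighbors of its own color. -/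
open Set

theorem IsChain.exists_isGreatest {α : Type*} [PartialOrder α] {s : Set α}
    (hc : IsChain (· ≤ ·) s) (hf : s.Finite) (hs : s.Nonempty) : ∃ m, IsGreatest s m := by
  obtain ⟨m, hm⟩ := hf.exists_maximal hs
  refine ⟨m, hm.prop, fun a ha => ?_⟩
  rcases eq_or_ne a m with rfl | hne
  · exact le_rfl
  · exact (hc ha hm.prop hne).elim id fun hma => hm.le_of_ge ha hma

theorem IsTreeOrder.exists_isGreatest_of_subset_Ioi {V : Type*} [PartialOrder V]
    (htree : IsTreeOrder V) {u : V} {s : Set V} (hsu : s ⊆ Ioi u) (hf : s.Finite)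
    (hs : s.Nonempty) : ∃ m, IsGreatest s m :=
  ((htree u).mono fun _ hv => (hsu hv).le).exists_isGreatest hf hs

theorem compGraph_adj_iff {V : Type*} [PartialOrder V] {u v : V} :
    (compGraph V).Adj u v ↔ v < u ∨ u < v := by
  simp only [compGraph, lt_iff_le_and_ne]
  constructor
  · rintro ⟨hne, huv | hvu⟩
    exacts [Or.inr ⟨huv, hne⟩, Or.inl ⟨hvu, hne.symm⟩]
  · rintro (⟨hvu, hne⟩ | ⟨huv, hne⟩)
    exacts [⟨hne.symm, Or.inr hvu⟩, ⟨hne, Or.inl huv⟩]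

theorem deficiency_compGraph {V α : Type*} [PartialOrder V] [Finite V] (c : V → α) (u : V) :
    deficiency (compGraph V) c u =
      (c ⁻¹' {c u} ∩ Iio u).ncard + (c ⁻¹' {c u} ∩ Ioi u).ncard := by
  have hdisj : Disjoint (c ⁻¹' {c u} ∩ Iio u) (c ⁻¹' {c u} ∩ Ioi u) :=
    (Iio_disjoint_Ioi_of_le le_rfl).mono inter_subset_right inter_subset_right
  rw [deficiency, ← ncard_union_eq hdisj, ← inter_union_distrib_left]
  congr 1
  ext w
  simp only [compGraph_adj_iff, mem_ofPred_eq, mem_inter_iff, mem_preimage, mem_singleton_iff,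
    mem_union, mem_Iio, mem_Ioi]
  tauto

theorem ncard_inter_Iio_add_ncard_inter_Ioi_le {V : Type*} [PartialOrder V] [Finite V]
    {P : Set V} {u m : V} (hu : u ∈ P) (hm : IsGreatest (P ∩ Ioi u) m) :
    (P ∩ Iio u).ncard + (P ∩ Ioi u).ncard ≤ (P ∩ Iio m).ncard := by
  set B := insert u ((P ∩ Ioi u) \ {m})
  have hB : B.ncard = (P ∩ Ioi u).ncard := by
    rw [ncard_insert_of_notMem (fun h => lt_irrefl u h.1.2), ncard_sdiff_singleton_add_one hm.1]
  have hdisj : Disjoint (P ∩ Iio u) B := by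
    rw [disjoint_insert_right]
    refine ⟨fun h => lt_irrefl u h.2, ?_⟩
    exact (Iio_disjoint_Ioi_of_le le_rfl).mono inter_subset_right
      (sdiff_subset.trans inter_subset_right)
  have hsub : P ∩ Iio u ∪ B ⊆ P ∩ Iio m := by
    rintro v (⟨hvP, hvu⟩ | rfl | ⟨hv, hvm⟩)
    · exact ⟨hvP, hvu.trans hm.1.2⟩
    · exact ⟨hu, hm.1.2⟩
    · exact ⟨hv.1, (hm.2 hv).lt_of_ne hvm⟩
  calc (P ∩ Iio u).ncard + (P ∩ Ioi u).ncard = (P ∩ Iio u ∪ B).ncard := by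
        rw [ncard_union_eq hdisj, hB]
    _ ≤ (P ∩ Iio m).ncard := ncard_le_ncard hsub

/-- If every vertex has at most `D` strict descendants of its own color, then `c` is a
`(C,D)`-coloring of the comparability graph of the tree order. -/
theorem stmt6 {V : Type*} [Fintype V] [PartialOrder V] (htree : IsTreeOrder V)
    (C D : ℕ) (c : V → Fin C)
    (h : ∀ u : V, {v | v < u ∧ c v = c u}.ncard ≤ D) :
    IsDefColoring (compGraph V) D c := by
  intro u
  rw [deficiency_compGraph]
  set P := c ⁻¹' {c u}
  have hu : u ∈ P := rfl
  have hP : ∀ x ∈ P, (P ∩ Iio x).ncard ≤ D := by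
    intro x hx
    convert h x using 2
    ext v
    simp only [P, mem_inter_iff, mem_preimage, mem_singleton_iff, mem_Iio, mem_ofPred_eq,
      show c u = c x from hx.symm]
    tauto
  rcases (P ∩ Ioi u).eq_empty_or_nonempty with hA | hA
  · simpa [hA] using hP u hu
  · obtain ⟨m, hm⟩ := htree.exists_isGreatest_of_subset_Ioi inter_subset_right (toFinite _) hA
    exact (ncard_inter_Iio_add_ncard_inter_Ioi_le hu hm).trans (hP m hm.1.1)
end

section
/- Let ≤ be a tree order on a finite set V, let G be its comparability graph, and let D ≥ 0 be an integer. Define g : V → {1,2,3,…} by well-founded recursion on <: g(u) is the least positive integer i such that u has at most D strict descendants v with g(v) = i (this is well defined since V is finite). Then for every integer C ≥ 1, G admits a (C,D)-coloring if and only if g(u) ≤ C for every u ∈ V. -/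
/-!
The labelling `g` is itself a `D`-defective coloring with `max g` colours.

Conversely, fix a `D`-defective coloring `c` with colour set `α`, and measure the part of the
tree below `u` by the sum over colours of the class sizes capped at `D + 1`; this is at most
`|α| (D + 1)`. By well-founded induction it is at least `(g u - 1)(D + 1)` plus the number of
vertices below `u` labelled `g u`: the vertices strictly below `u` with label `ℓ` split along the
maximal ones, whose down-sets are disjoint in a tree order, and the capped sum of a disjoint
union dominates the merged bounds, strictly so once `u` joins its own unsaturated class.
-/
open Finset
open scoped Classical

section CappedSum

variable {κ : Type*} [Fintype κ]

def cappedSum (K : ℕ) (x : κ → ℕ) : ℕ := ∑ j, min (x j) K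

lemma cappedSum_le_card_mul (K : ℕ) (x : κ → ℕ) : cappedSum K x ≤ Fintype.card κ * K := by
  unfold cappedSum
  calc ∑ j, min (x j) K ≤ ∑ _j : κ, K := sum_le_sum fun j _ => min_le_right _ _
    _ = Fintype.card κ * K := by rw [sum_const, card_univ, smul_eq_mul]

lemma cappedSum_le_card_mul_add_sum_compl (K : ℕ) (x : κ → ℕ) (F : Finset κ) :
    cappedSum K x ≤ #F * K + ∑ j ∈ Fᶜ, x j := by
  unfold cappedSum
  rw [← sum_add_sum_compl F]
  gcongr with j
  · calc ∑ j ∈ F, min (x j) K ≤ ∑ _j ∈ F, K := sum_le_sum fun j _ => min_le_right _ _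
      _ = #F * K := by rw [sum_const, smul_eq_mul]
  · exact min_le_left _ _

lemma cappedSum_eq_card_mul_add_sum_compl (K : ℕ) (x : κ → ℕ) :
    cappedSum K x = #{j | K ≤ x j} * K + ∑ j ∈ ({j | K ≤ x j} : Finset κ)ᶜ, x j := by
  unfold cappedSum
  rw [← sum_add_sum_compl ({j | K ≤ x j} : Finset κ),
    sum_congr rfl fun j hj => min_eq_right (mem_filter.1 hj).2, sum_const, smul_eq_mul]
  congr 1
  refine sum_congr rfl fun j hj => min_eq_left ?_
  simp only [mem_compl, mem_filter, mem_univ, true_and, not_le] at hj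
  exact hj.le

lemma cappedSum_lt_cappedSum {K : ℕ} {x y : κ → ℕ} (hxy : ∀ j, x j ≤ y j) {i : κ}
    (hi : x i < y i) (hiK : y i ≤ K) : cappedSum K x < cappedSum K y :=
  sum_lt_sum (fun j _ => min_le_min_right K (hxy j))
    ⟨i, mem_univ i, by rw [min_eq_left hiK]; exact (min_le_left _ _).trans_lt hi⟩

/-- The `#F` coordinates saturated in the sum contribute `K` each; if `#F ≤ q`, every `x m` has
at least `t m` of its mass outside them, and one of them even `(q - #F) * K + t m`. -/
lemma add_min_sum_le_cappedSum_sum {ι : Type*} {K q : ℕ} {M : Finset ι} (hM : M.Nonempty)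
    (x : ι → κ → ℕ) (t : ι → ℕ) (h : ∀ m ∈ M, q * K + t m ≤ cappedSum K (x m)) :
    q * K + min (∑ m ∈ M, t m) K ≤ cappedSum K (∑ m ∈ M, x m) := by
  rw [cappedSum_eq_card_mul_add_sum_compl]
  set F : Finset κ := {j | K ≤ (∑ m ∈ M, x m) j}
  by_cases hF : q < #F
  · have : (q + 1) * K ≤ #F * K := Nat.mul_le_mul_right K hF
    have : (q + 1) * K = q * K + K := by ring
    have : min (∑ m ∈ M, t m) K ≤ K := min_le_right _ _
    omega
  · have hqF : #F * K ≤ q * K := Nat.mul_le_mul_right K (not_lt.1 hF)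
    have hm : ∀ m ∈ M, q * K + t m ≤ #F * K + ∑ j ∈ Fᶜ, x m j := fun m hm =>
      (h m hm).trans (cappedSum_le_card_mul_add_sum_compl K (x m) F)
    obtain ⟨m₀, hm₀⟩ := hM
    have hrest : ∑ m ∈ M.erase m₀, t m ≤ ∑ m ∈ M.erase m₀, ∑ j ∈ Fᶜ, x m j :=
      sum_le_sum fun m hm' => by have := hm m (mem_of_mem_erase hm'); omega
    have hswap : ∑ j ∈ Fᶜ, (∑ m ∈ M, x m) j = ∑ m ∈ M, ∑ j ∈ Fᶜ, x m j := by
      simp only [Finset.sum_apply]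
      exact sum_comm
    rw [hswap, ← add_sum_erase M (fun m => ∑ j ∈ Fᶜ, x m j) hm₀]
    have := hm m₀ hm₀
    have := add_sum_erase M t hm₀
    have := min_le_left (∑ m ∈ M, t m) K
    omega

end CappedSum

section TreeOrder

variable {V : Type*} [PartialOrder V]

lemma IsTreeOrder.le_total_of_le (htree : IsTreeOrder V) {v a b : V} (ha : v ≤ a) (hb : v ≤ b) :
    a ≤ b ∨ b ≤ a := by
  rcases eq_or_ne a b with rfl | hne
  · exact Or.inl le_rfl
  · exact htree v ha hb hne

lemma IsTreeOrder.le_of_maximal (htree : IsTreeOrder V) {P : V → Prop} {m a v : V}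
    (hm : Maximal P m) (ha : P a) (hvm : v ≤ m) (hva : v ≤ a) : a ≤ m :=
  (htree.le_total_of_le hvm hva).elim (fun h => hm.2 ha h) id

lemma IsTreeOrder.pairwiseDisjoint_of_le (htree : IsTreeOrder V) {M : Set V}
    (hM : IsAntichain (· ≤ ·) M) {t : V → Finset V} (ht : ∀ m, ∀ v ∈ t m, v ≤ m) :
    M.PairwiseDisjoint t := by
  intro m₁ hm₁ m₂ hm₂ hne
  refine disjoint_left.2 fun v hv₁ hv₂ => ?_
  rcases htree.le_total_of_le (ht m₁ v hv₁) (ht m₂ v hv₂) with h | h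
  · exact hM hm₁ hm₂ hne h
  · exact hM hm₂ hm₁ hne.symm h

lemma card_filter_lt_add_one [Fintype V] (u : V) {p : V → Prop} [DecidablePred p] (hp : p u) :
    #{v | v < u ∧ p v} + 1 = #{v | v ≤ u ∧ p v} := by
  rw [← card_insert_of_notMem (s := ({v | v < u ∧ p v} : Finset V)) (a := u) (by simp)]
  congr 1
  ext v
  simp only [mem_insert, mem_filter, mem_univ, true_and, le_iff_lt_or_eq]
  constructor
  · rintro (rfl | ⟨hv, hpv⟩)
    exacts [⟨Or.inr rfl, hp⟩, ⟨Or.inl hv, hpv⟩]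
  · rintro ⟨hv | rfl, hpv⟩
    exacts [Or.inr ⟨hv, hpv⟩, Or.inl rfl]

end TreeOrder

lemma IsDefColoring.of_eq_iff {W α β : Type*} {G : SimpleGraph W} {D : ℕ} {c : W → α}
    {c' : W → β} (hc : IsDefColoring G D c) (h : ∀ v w, c' v = c' w ↔ c v = c w) :
    IsDefColoring G D c' := by
  intro v
  simp only [deficiency, h]
  exact hc v

section GreedyLabel

variable {V : Type*} [PartialOrder V] {D : ℕ} {g : V → ℕ}

variable (D) in
def IsGreedyLabel (g : V → ℕ) : Prop :=
  ∀ u, IsLeast {i : ℕ | 1 ≤ i ∧ {v | v < u ∧ g v = i}.ncard ≤ D} (g u)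

lemma IsGreedyLabel.one_le (hg : IsGreedyLabel D g) (u : V) : 1 ≤ g u := (hg u).1.1

lemma IsGreedyLabel.card_lt_eq_le [Fintype V] (hg : IsGreedyLabel D g) (u : V) :
    #{v | v < u ∧ g v = g u} ≤ D := by
  have := (hg u).1.2
  rwa [← coe_filter_univ, Set.ncard_coe_finset] at this

lemma IsGreedyLabel.lt_card_of_lt [Fintype V] (hg : IsGreedyLabel D g) {u : V} {i : ℕ}
    (hi : 1 ≤ i) (hiu : i < g u) : D < #{v | v < u ∧ g v = i} := by
  by_contra! h
  have := (hg u).2 ⟨hi, by rwa [← coe_filter_univ, Set.ncard_coe_finset]⟩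
  omega

lemma IsGreedyLabel.isDefColoring [Finite V] (htree : IsTreeOrder V) (hg : IsGreedyLabel D g) :
    IsDefColoring (compGraph V) D g := by
  intro u
  unfold deficiency
  by_cases hA : ∃ w, u < w ∧ g w = g u
  · -- Every neighbour of `u` with its label lies below the highest ancestor `m` with that label,
    -- and `u` is one of the at most `D` descendants of `m` labelled `g m`.
    obtain ⟨w, hw⟩ := hA
    obtain ⟨m, -, hm⟩ := (Set.toFinite {w | u < w ∧ g w = g u}).exists_le_maximal hw
    have hum : u ∈ {v | v < m ∧ g v = g m} := ⟨hm.1.1, hm.1.2.symm⟩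
    have hsub : {w | (compGraph V).Adj u w ∧ g w = g u}
        ⊆ insert m ({v | v < m ∧ g v = g m} \ {u}) := by
      rintro w ⟨⟨hne, hle | hle⟩, hgw⟩
      · have hwm : w ≤ m := htree.le_of_maximal hm ⟨lt_of_le_of_ne hle hne, hgw⟩ hm.1.1.le hle
        rcases hwm.lt_or_eq with h | rfl
        · exact Or.inr ⟨⟨h, hgw.trans hm.1.2.symm⟩, hne.symm⟩
        · exact Or.inl rfl
      · exact Or.inr ⟨⟨(lt_of_le_of_ne hle hne.symm).trans hm.1.1, hgw.trans hm.1.2.symm⟩,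
          hne.symm⟩
    calc _ ≤ (insert m ({v | v < m ∧ g v = g m} \ {u})).ncard := Set.ncard_le_ncard hsub
      _ ≤ ({v | v < m ∧ g v = g m} \ {u}).ncard + 1 := Set.ncard_insert_le _ _
      _ = {v | v < m ∧ g v = g m}.ncard := Set.ncard_sdiff_singleton_add_one hum
      _ ≤ D := (hg m).1.2
  · push Not at hA
    refine le_trans (Set.ncard_le_ncard ?_) (hg u).1.2
    rintro w ⟨⟨hne, hle | hle⟩, hgw⟩
    · exact absurd hgw (hA w (lt_of_le_of_ne hle hne))
    · exact ⟨lt_of_le_of_ne hle hne.symm, hgw⟩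

end GreedyLabel

section Potential

variable {V α : Type*} [Fintype V] [PartialOrder V] {D : ℕ}

noncomputable def colorCount (c : V → α) (u : V) (j : α) : ℕ := #{v | v ≤ u ∧ c v = j}

lemma colorCount_pos (c : V → α) (u : V) : 0 < colorCount c u (c u) :=
  card_pos.2 ⟨u, by simp⟩

lemma IsDefColoring.colorCount_self_le {c : V → α} (hc : IsDefColoring (compGraph V) D c)
    (u : V) : colorCount c u (c u) ≤ D + 1 := by
  have hdef := hc u
  rw [deficiency, ← coe_filter_univ, Set.ncard_coe_finset] at hdef
  have : #{v | v < u ∧ c v = c u} ≤ #{w | (compGraph V).Adj u w ∧ c w = c u} :=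
    card_le_card fun v hv => by
      simp only [mem_filter, mem_univ, true_and] at hv ⊢
      exact ⟨⟨hv.1.ne', Or.inr hv.1.le⟩, hv.2⟩
  rw [colorCount, ← card_filter_lt_add_one u (p := fun v => c v = c u) rfl]
  omega

variable [Fintype α]

lemma IsTreeOrder.cappedSum_sum_colorCount_lt (htree : IsTreeOrder V) {c : V → α}
    (hc : IsDefColoring (compGraph V) D c) {u : V} {M : Finset V}
    (hM : IsAntichain (· ≤ ·) (M : Set V)) (hMu : ∀ m ∈ M, m < u) :
    cappedSum (D + 1) (∑ m ∈ M, colorCount c m) < cappedSum (D + 1) (colorCount c u) := by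
  have hle : ∀ j, (∑ m ∈ M, colorCount c m) j ≤ #{v | v < u ∧ c v = j} := by
    intro j
    simp only [Finset.sum_apply, colorCount]
    rw [← card_biUnion (htree.pairwiseDisjoint_of_le hM fun m v hv => (mem_filter.1 hv).2.1)]
    refine card_le_card fun v hv => ?_
    simp only [mem_biUnion, mem_filter, mem_univ, true_and] at hv ⊢
    obtain ⟨m, hm, hvm, hcv⟩ := hv
    exact ⟨hvm.trans_lt (hMu m hm), hcv⟩
  have hself : #{v | v < u ∧ c v = c u} < colorCount c u (c u) := by
    rw [colorCount, ← card_filter_lt_add_one u (p := fun v => c v = c u) rfl]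
    exact Nat.lt_succ_self _
  refine cappedSum_lt_cappedSum (fun j => (hle j).trans (card_le_card fun v hv => ?_))
    ((hle (c u)).trans_lt hself) (hc.colorCount_self_le u)
  simp only [mem_filter, mem_univ, true_and] at hv ⊢
  exact ⟨hv.1.le, hv.2⟩

lemma IsTreeOrder.add_min_card_lt_cappedSum (htree : IsTreeOrder V) {c : V → α}
    (hc : IsDefColoring (compGraph V) D c) {g : V → ℕ} {u : V} {ℓ : ℕ}
    (hY : ({v | v < u ∧ g v = ℓ} : Finset V).Nonempty)
    (ih : ∀ m < u, (g m - 1) * (D + 1) + #{v | v ≤ m ∧ g v = g m}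
      ≤ cappedSum (D + 1) (colorCount c m)) :
    (ℓ - 1) * (D + 1) + min #{v | v < u ∧ g v = ℓ} (D + 1)
      < cappedSum (D + 1) (colorCount c u) := by
  set Y : Finset V := {v | v < u ∧ g v = ℓ}
  set M : Finset V := {m ∈ Y | Maximal (· ∈ Y) m}
  have hMY : ∀ m ∈ M, m < u ∧ g m = ℓ := fun m hm => by
    simpa [Y] using (mem_filter.1 hm).1
  have hanti : IsAntichain (· ≤ ·) (M : Set V) :=
    (setOfPred_maximal_antichain (· ∈ Y)).subset fun m hm => (mem_filter.1 hm).2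
  have hYM : Y = M.biUnion fun m => {v | v ≤ m ∧ g v = ℓ} := by
    ext y
    simp only [mem_biUnion, mem_filter, mem_univ, true_and]
    constructor
    · intro hy
      obtain ⟨m, hym, hm⟩ := Y.exists_le_maximal hy
      exact ⟨m, mem_filter.2 ⟨hm.1, hm⟩, hym, (mem_filter.1 hy).2.2⟩
    · rintro ⟨m, hm, hym, hgy⟩
      exact mem_filter.2 ⟨mem_univ _, hym.trans_lt (hMY m hm).1, hgy⟩
  have hMne : M.Nonempty := by
    obtain ⟨y, hy⟩ := hY
    obtain ⟨m, -, hm⟩ := Y.exists_le_maximal hy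
    exact ⟨m, mem_filter.2 ⟨hm.1, hm⟩⟩
  have hmerge := add_min_sum_le_cappedSum_sum (K := D + 1) (q := ℓ - 1) hMne (colorCount c)
    (fun m => #{v | v ≤ m ∧ g v = ℓ}) fun m hm => by
      obtain ⟨hmu, rfl⟩ := hMY m hm
      exact ih m hmu
  rw [← card_biUnion (htree.pairwiseDisjoint_of_le hanti (t := fun m => {v | v ≤ m ∧ g v = ℓ})
    fun m v hv => (mem_filter.1 hv).2.1), ← hYM] at hmerge
  exact hmerge.trans_lt (htree.cappedSum_sum_colorCount_lt hc hanti fun m hm => (hMY m hm).1)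

end Potential

section Forward

variable {V α : Type*} [Fintype V] [PartialOrder V] [Fintype α] {D : ℕ} {g : V → ℕ}

lemma IsGreedyLabel.le_cappedSum_colorCount (htree : IsTreeOrder V) (hg : IsGreedyLabel D g)
    {c : V → α} (hc : IsDefColoring (compGraph V) D c) (u : V) :
    (g u - 1) * (D + 1) + #{v | v ≤ u ∧ g v = g u} ≤ cappedSum (D + 1) (colorCount c u) := by
  induction u using WellFoundedLT.induction with
  | _ u ih =>
  have hstrict := fun ℓ hY => htree.add_min_card_lt_cappedSum hc (u := u) (ℓ := ℓ) hY ih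
  rw [← card_filter_lt_add_one u (p := fun v => g v = g u) rfl]
  rcases eq_empty_or_nonempty ({v | v < u ∧ g v = g u} : Finset V) with hY | hY
  · rw [hY, card_empty, zero_add]
    rcases (hg.one_le u).eq_or_lt with h1 | h2
    · have hpos : 0 < min (colorCount c u (c u)) (D + 1) := lt_min (colorCount_pos c u) D.succ_pos
      rw [← h1, Nat.sub_self, zero_mul, zero_add]
      exact hpos.trans_le (single_le_sum (f := fun j => min (colorCount c u j) (D + 1))
        (fun _ _ => Nat.zero_le _) (mem_univ (c u)))
    · -- `u` has more than `D` descendants labelled `g u - 1`, which fill one more colour class.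
      have hD := hg.lt_card_of_lt (u := u) (i := g u - 1) (by omega) (by omega)
      have := hstrict (g u - 1) (card_pos.1 (by omega))
      rw [min_eq_right hD] at this
      obtain ⟨k, hk⟩ : ∃ k, g u - 1 = k + 1 := ⟨g u - 2, by omega⟩
      rw [hk, Nat.add_sub_cancel] at this
      rw [hk, Nat.succ_mul]
      omega
  · have := hstrict (g u) hY
    rw [min_eq_left (by have := hg.card_lt_eq_le u; omega)] at this
    omega

lemma IsGreedyLabel.le_card_of_isDefColoring (htree : IsTreeOrder V) (hg : IsGreedyLabel D g)
    {c : V → α} (hc : IsDefColoring (compGraph V) D c) (u : V) : g u ≤ Fintype.card α := by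
  have hinv := hg.le_cappedSum_colorCount htree hc u
  have hcap := cappedSum_le_card_mul (D + 1) (colorCount c u)
  have hpos : 0 < #{v | v ≤ u ∧ g v = g u} := card_pos.2 ⟨u, by simp⟩
  have : g u - 1 < Fintype.card α := Nat.lt_of_mul_lt_mul_right (a := D + 1) (by omega)
  omega

end Forward

theorem stmt7_general {V : Type*} [Fintype V] [PartialOrder V] (htree : IsTreeOrder V)
    (D : ℕ) (g : V → ℕ)
    (hg : ∀ u : V, IsLeast {i : ℕ | 1 ≤ i ∧ {v | v < u ∧ g v = i}.ncard ≤ D} (g u))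
    (C : ℕ) :
    (∃ c : V → Fin C, IsDefColoring (compGraph V) D c) ↔ ∀ u : V, g u ≤ C := by
  have hg : IsGreedyLabel D g := hg
  constructor
  · rintro ⟨c, hc⟩ u
    simpa using hg.le_card_of_isDefColoring htree hc u
  · intro hle
    have h1 := hg.one_le
    refine ⟨fun u => ⟨g u - 1, by have := h1 u; have := hle u; omega⟩,
      (hg.isDefColoring htree).of_eq_iff fun v w => ?_⟩
    have := h1 v
    have := h1 w
    simp only [Fin.ext_iff]
    omega

/-- Let `g : V → ℕ` be the greedy labeling defined by well-founded recursion: `g u` is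
the least positive integer `i` such that `u` has at most `D` strict descendants `v` with
`g v = i` (here characterized by the corresponding `IsLeast` property). Then for every
`C ≥ 1`, the comparability graph admits a `(C,D)`-coloring iff `g u ≤ C` for all `u`. -/
theorem stmt7 {V : Type*} [Fintype V] [PartialOrder V] (htree : IsTreeOrder V)
    (D : ℕ) (g : V → ℕ)
    (hg : ∀ u : V, IsLeast {i : ℕ | 1 ≤ i ∧ {v | v < u ∧ g v = i}.ncard ≤ D} (g u))
    (C : ℕ) (hC : 1 ≤ C) :
    (∃ c : V → Fin C, IsDefColoring (compGraph V) D c) ↔ ∀ u : V, g u ≤ C :=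
  stmt7_general htree D g hg C
end

section
/- If the 3CNF formula f has a satisfying assignment, then the split graph G(f) admits a (2n,1)-coloring. -/
/-- A 3CNF formula with `n` variables and `m` clauses: each clause `j` consists of three
literals `lit j 0, lit j 1, lit j 2`, a literal being a pair of a variable index and a
Boolean (`true` for a positive occurrence), over pairwise distinct variables. -/
structure CNF3 (n m : ℕ) where
  lit : Fin m → Fin 3 → Fin n × Bool
  distinct : ∀ j : Fin m, Function.Injective (fun a => (lit j a).1)

/-- `s` satisfies `f`: every clause contains a literal made true by `s`. -/
def CNF3.Satisfies {n m : ℕ} (f : CNF3 n m) (s : Fin n → Bool) : Prop :=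
  ∀ j : Fin m, ∃ a : Fin 3, s (f.lit j a).1 = (f.lit j a).2

/-- Vertices of the split graph `G(f)`: clique vertices `u_i^k` (`k ∈ {A,B,C,D}` encoded
as `Fin 4` with `A=0, B=1, C=2, D=3`), and independent-set vertices `z_i^k` and `v_j`. -/
abbrev SatVtx (n m : ℕ) := (Fin n × Fin 4) ⊕ ((Fin n × Fin 4) ⊕ Fin m)

/-- The edges of `G(f)`, oriented from the clique side: `U` is a clique, `Z` is
independent; all `U`–`Z` edges are present except that `z_i^k` is non-adjacent to
`u_i^{kᵒ}` for `kᵒ ≠ k`, and `v_j` is non-adjacent to `u_i^A, u_i^B` (resp.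
`u_i^A, u_i^C`) when `x_i` occurs positively (resp. negatively) in clause `j`. -/
def satRel {n m : ℕ} (f : CNF3 n m) : SatVtx n m → SatVtx n m → Prop
  | Sum.inl _, Sum.inl _ => True
  | Sum.inl (i, k), Sum.inr (Sum.inl (iz, kz)) => i ≠ iz ∨ k = kz
  | Sum.inl (i, k), Sum.inr (Sum.inr j) =>
      ¬ ∃ a : Fin 3, (f.lit j a).1 = i ∧
        (((f.lit j a).2 = true ∧ (k = 0 ∨ k = 1)) ∨
         ((f.lit j a).2 = false ∧ (k = 0 ∨ k = 2)))
  | Sum.inr _, _ => False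

/-- The split graph `G(f)`. -/
def satGraph {n m : ℕ} (f : CNF3 n m) : SimpleGraph (SatVtx n m) :=
  SimpleGraph.fromRel (satRel f)

def satCol {n m : ℕ} (s : Fin n → Bool) (t : Fin m → Fin n) : SatVtx n m → Fin (2*n)
  | Sum.inl (i,k) =>
      if k = 0 ∨ k = (if s i then 1 else 2) then ⟨2*i.val, by have := i.isLt; omega⟩
      else ⟨2*i.val+1, by have := i.isLt; omega⟩
  | Sum.inr (Sum.inl (i,k)) =>
      if k = 0 ∨ k = (if s i then 1 else 2) then ⟨2*i.val+1, by have := i.isLt; omega⟩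
      else ⟨2*i.val, by have := i.isLt; omega⟩
  | Sum.inr (Sum.inr j) => ⟨2*(t j).val, by have := (t j).isLt; omega⟩

def satPartner {n m : ℕ} (s : Fin n → Bool) : SatVtx n m → SatVtx n m
  | Sum.inl (i,k) => Sum.inl (i, if s i then ![1,0,3,2] k else ![2,3,0,1] k)
  | x => x



lemma colU_val {n m : ℕ} (s : Fin n → Bool) (t : Fin m → Fin n) (i : Fin n) (k : Fin 4) :
    (satCol s t (Sum.inl (i,k))).val
      = if k = 0 ∨ k = (if s i then 1 else 2) then 2*i.val else 2*i.val+1 := by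
  simp only [satCol]
  exact apply_ite Fin.val _ _ _

lemma colZ_val {n m : ℕ} (s : Fin n → Bool) (t : Fin m → Fin n) (i : Fin n) (k : Fin 4) :
    (satCol s t (Sum.inr (Sum.inl (i,k)))).val
      = if k = 0 ∨ k = (if s i then 1 else 2) then 2*i.val+1 else 2*i.val := by
  simp only [satCol]
  exact apply_ite Fin.val _ _ _

lemma colV_val {n m : ℕ} (s : Fin n → Bool) (t : Fin m → Fin n) (j : Fin m) :
    (satCol s t (Sum.inr (Sum.inr j))).val = 2*(t j).val := rfl

lemma colU_or {n m : ℕ} (s : Fin n → Bool) (t : Fin m → Fin n) (i : Fin n) (k : Fin 4) :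
    (satCol s t (Sum.inl (i,k))).val = 2*i.val ∨
    (satCol s t (Sum.inl (i,k))).val = 2*i.val+1 := by
  rw [colU_val]
  by_cases hc : k = 0 ∨ k = (if s i then 1 else 2)
  · rw [if_pos hc]; left; rfl
  · rw [if_neg hc]; right; rfl

lemma colZ_or {n m : ℕ} (s : Fin n → Bool) (t : Fin m → Fin n) (i : Fin n) (k : Fin 4) :
    (satCol s t (Sum.inr (Sum.inl (i,k)))).val = 2*i.val ∨
    (satCol s t (Sum.inr (Sum.inl (i,k)))).val = 2*i.val+1 := by
  rw [colZ_val]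
  by_cases hc : k = 0 ∨ k = (if s i then 1 else 2)
  · rw [if_pos hc]; right; rfl
  · rw [if_neg hc]; left; rfl

lemma colUZ_sum {n m : ℕ} (s : Fin n → Bool) (t : Fin m → Fin n) (i : Fin n) (k : Fin 4) :
    (satCol s t (Sum.inl (i,k))).val + (satCol s t (Sum.inr (Sum.inl (i,k)))).val
      = 4*i.val+1 := by
  rw [colU_val, colZ_val]
  by_cases hc : k = 0 ∨ k = (if s i then 1 else 2)
  · rw [if_pos hc, if_pos hc]; omega
  · rw [if_neg hc, if_neg hc]; omega

lemma satKey {n m : ℕ} (f : CNF3 n m) (s : Fin n → Bool) (a : Fin m → Fin 3)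
    (ha : ∀ j, s (f.lit j (a j)).1 = (f.lit j (a j)).2) :
    ∀ v w, (satGraph f).Adj v w →
      satCol s (fun j => (f.lit j (a j)).1) w = satCol s (fun j => (f.lit j (a j)).1) v →
      w = satPartner s v := by
  intro v w hadj hcol
  rw [satGraph, SimpleGraph.fromRel_adj] at hadj
  obtain ⟨hne, hrel⟩ := hadj
  replace hcol := congrArg Fin.val hcol
  set t : Fin m → Fin n := fun j => (f.lit j (a j)).1 with ht
  rcases v with ⟨i, k⟩ | ⟨⟨i, k⟩ | j⟩ <;> rcases w with ⟨i', k'⟩ | ⟨⟨i', k'⟩ | j'⟩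
  · -- U-U
    have hii : i = i' := by
      have h1 := colU_or s t i k
      have h2 := colU_or s t i' k'
      apply Fin.ext; omega
    subst hii
    have hkk : k ≠ k' := fun h => hne (by rw [h])
    rw [colU_val, colU_val] at hcol
    have hcc : (k' = 0 ∨ k' = (if s i then 1 else 2)) ↔
        (k = 0 ∨ k = (if s i then 1 else 2)) := by
      constructor <;> intro hc <;> by_contra hc2
      · rw [if_pos hc, if_neg hc2] at hcol; omega
      · rw [if_neg hc2, if_pos hc] at hcol; omega
    rcases hsi : s i with _ | _ <;>
      simp only [satPartner, hsi, if_true, if_false, Bool.false_eq_true,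
        Sum.inl.injEq, Prod.mk.injEq, true_and] at hcc ⊢ <;>
      fin_cases k <;> fin_cases k' <;> simp_all
  · -- U-Z
    exfalso
    have hii : i = i' := by
      have h1 := colU_or s t i k
      have h2 := colZ_or s t i' k'
      apply Fin.ext; omega
    subst hii
    have hkk : k = k' := by
      rcases hrel with h | h
      · simp only [satRel] at h; tauto
      · simp only [satRel] at h
    have hsum := colUZ_sum s t i k
    rw [← hkk] at hcol
    omega
  · -- U-v_j
    exfalso
    rw [colV_val, colU_val] at hcol
    have hk1 : k = 0 ∨ k = (if s i then 1 else 2) := by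
      by_contra hk
      rw [if_neg hk] at hcol; omega
    rw [if_pos hk1] at hcol
    have hij : t j' = i := Fin.ext (by omega)
    rw [ht] at hij
    have hsat : s i = (f.lit j' (a j')).2 := by rw [← hij]; exact ha j'
    have hex : ∃ b : Fin 3, (f.lit j' b).1 = i ∧
        (((f.lit j' b).2 = true ∧ (k = 0 ∨ k = 1)) ∨
         ((f.lit j' b).2 = false ∧ (k = 0 ∨ k = 2))) := by
      refine ⟨a j', hij, ?_⟩
      rcases hb : (f.lit j' (a j')).2 with _ | _
      · right; refine ⟨rfl, ?_⟩
        rw [hb] at hsat; rw [hsat] at hk1; simpa using hk1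
      · left; refine ⟨rfl, ?_⟩
        rw [hb] at hsat; rw [hsat] at hk1; simpa using hk1
    rcases hrel with h | h
    · simp only [satRel] at h; exact h hex
    · simp only [satRel] at h
  · -- Z-U
    exfalso
    have hii : i = i' := by
      have h1 := colU_or s t i' k'
      have h2 := colZ_or s t i k
      apply Fin.ext; omega
    subst hii
    have hkk : k' = k := by
      rcases hrel with h | h
      · simp only [satRel] at h
      · simp only [satRel] at h; tauto
    have hsum := colUZ_sum s t i k
    rw [hkk] at hcol
    omega
  · exfalso; rcases hrel with h | h <;> simp only [satRel] at h
  · exfalso; rcases hrel with h | h <;> simp only [satRel] at h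
  · -- v_j-U
    exfalso
    rw [colU_val, colV_val] at hcol
    have hk1 : k' = 0 ∨ k' = (if s i' then 1 else 2) := by
      by_contra hk
      rw [if_neg hk] at hcol; omega
    rw [if_pos hk1] at hcol
    have hij : t j = i' := Fin.ext (by omega)
    rw [ht] at hij
    have hsat : s i' = (f.lit j (a j)).2 := by rw [← hij]; exact ha j
    have hex : ∃ b : Fin 3, (f.lit j b).1 = i' ∧
        (((f.lit j b).2 = true ∧ (k' = 0 ∨ k' = 1)) ∨
         ((f.lit j b).2 = false ∧ (k' = 0 ∨ k' = 2))) := by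
      refine ⟨a j, hij, ?_⟩
      rcases hb : (f.lit j (a j)).2 with _ | _
      · right; refine ⟨rfl, ?_⟩
        rw [hb] at hsat; rw [hsat] at hk1; simpa using hk1
      · left; refine ⟨rfl, ?_⟩
        rw [hb] at hsat; rw [hsat] at hk1; simpa using hk1
    rcases hrel with h | h
    · simp only [satRel] at h
    · simp only [satRel] at h; exact h hex
  · exfalso; rcases hrel with h | h <;> simp only [satRel] at h
  · exfalso; rcases hrel with h | h <;> simp only [satRel] at h

/-- If the 3CNF formula `f` is satisfiable, then `G(f)` admits a `(2n,1)`-coloring. -/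
theorem stmt12 {n m : ℕ} (f : CNF3 n m) (h : ∃ s : Fin n → Bool, f.Satisfies s) :
    ∃ c : SatVtx n m → Fin (2 * n), IsDefColoring (satGraph f) 1 c := by
  obtain ⟨s, hs⟩ := h
  choose a ha using hs
  refine ⟨satCol s (fun j => (f.lit j (a j)).1), ?_⟩
  intro v
  have hsub : {w | (satGraph f).Adj v w ∧
      satCol s (fun j => (f.lit j (a j)).1) w = satCol s (fun j => (f.lit j (a j)).1) v}
      ⊆ {satPartner s v} := by
    rintro w ⟨hw1, hw2⟩
    exact satKey f s a ha v w hw1 hw2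
  unfold deficiency
  calc {w | (satGraph f).Adj v w ∧
        satCol s (fun j => (f.lit j (a j)).1) w = satCol s (fun j => (f.lit j (a j)).1) v}.ncard
      ≤ ({satPartner s v} : Set _).ncard :=
        Set.ncard_le_ncard hsub (Set.finite_singleton _)
    _ = 1 := Set.ncard_singleton _
end

section
/- If the split graph G(f) admits a (2n,1)-coloring, then the 3CNF formula f has a satisfying assignment. -/
section Aux

variable {n m : ℕ} (f : CNF3 n m) (c : SatVtx n m → Fin (2 * n))

lemma adj_UU (p q : Fin n × Fin 4) (hpq : p ≠ q) :
    (satGraph f).Adj (Sum.inl p) (Sum.inl q) := by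
  refine (SimpleGraph.fromRel_adj _ _ _).2 ⟨by simpa using hpq, Or.inl trivial⟩

lemma adj_UZ (i : Fin n) (k : Fin 4) (iz : Fin n) (kz : Fin 4) :
    (satGraph f).Adj (Sum.inl (i,k)) (Sum.inr (Sum.inl (iz,kz))) ↔ (i ≠ iz ∨ k = kz) := by
  simp [satGraph, SimpleGraph.fromRel_adj, satRel]

lemma adj_UV (i : Fin n) (k : Fin 4) (j : Fin m) :
    (satGraph f).Adj (Sum.inl (i,k)) (Sum.inr (Sum.inr j)) ↔
      ¬ ∃ a : Fin 3, (f.lit j a).1 = i ∧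
        (((f.lit j a).2 = true ∧ (k = 0 ∨ k = 1)) ∨
         ((f.lit j a).2 = false ∧ (k = 0 ∨ k = 2))) := by
  simp [satGraph, SimpleGraph.fromRel_adj, satRel]

lemma two_le_def {V α : Type*} [Finite V] (G : SimpleGraph V) (cc : V → α) (v w1 w2 : V)
    (h1 : G.Adj v w1) (h2 : G.Adj v w2) (hne : w1 ≠ w2)
    (hc1 : cc w1 = cc v) (hc2 : cc w2 = cc v) : 2 ≤ deficiency G cc v := by
  have hsub : ({w1, w2} : Set V) ⊆ {w | G.Adj v w ∧ cc w = cc v} := by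
    rintro x (rfl | rfl)
    · exact ⟨h1, hc1⟩
    · exact ⟨h2, hc2⟩
  have h2' : ({w1, w2} : Set V).ncard = 2 := Set.ncard_pair hne
  rw [deficiency, ← h2']
  exact Set.ncard_le_ncard hsub (Set.toFinite _)

end Aux
section Aux2

variable {n m : ℕ} (f : CNF3 n m) (c : SatVtx n m → Fin (2 * n))
  (hc : IsDefColoring (satGraph f) 1 c)

/-- the fiber of a color among clique vertices -/
def fib (a : Fin (2 * n)) : Finset (Fin n × Fin 4) :=
  Finset.univ.filter (fun p => c (Sum.inl p) = a)

include hc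

lemma fib_card_le (a : Fin (2 * n)) : (fib c a).card ≤ 2 := by
  by_contra hcon
  push_neg at hcon
  rw [Finset.two_lt_card_iff] at hcon
  obtain ⟨p, q, r, hp, hq, hr, hpq, hpr, hqr⟩ := hcon
  simp only [fib, Finset.mem_filter, Finset.mem_univ, true_and] at hp hq hr
  have := two_le_def (satGraph f) c (Sum.inl p) (Sum.inl q) (Sum.inl r)
    (adj_UU f p q hpq) (adj_UU f p r hpr)
    (by simpa using hqr) (hq.trans hp.symm) (hr.trans hp.symm)
  have := hc (Sum.inl p)
  omega

lemma fib_card_eq (a : Fin (2 * n)) : (fib c a).card = 2 := by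
  by_contra hcon
  have hlt : (fib c a).card < 2 := lt_of_le_of_ne (fib_card_le f c hc a) hcon
  have hsum : (Finset.univ : Finset (Fin n × Fin 4)).card
      = ∑ b : Fin (2 * n), (fib c b).card :=
    Finset.card_eq_sum_card_fiberwise (fun x _ => Finset.mem_univ _)
  have hstrict : ∑ b : Fin (2 * n), (fib c b).card < ∑ _b : Fin (2 * n), 2 :=
    Finset.sum_lt_sum (fun b _ => fib_card_le f c hc b) ⟨a, Finset.mem_univ a, hlt⟩
  simp only [Finset.sum_const, Finset.card_univ, Fintype.card_fin, smul_eq_mul] at hstrict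
  rw [← hsum] at hstrict
  simp [Fintype.card_prod] at hstrict
  omega

/-- every clique vertex has a same-colored partner in the clique, hence no
same-colored neighbor on the independent side -/
lemma no_cross (p : Fin n × Fin 4) (ζ : (Fin n × Fin 4) ⊕ Fin m)
    (hcol : c (Sum.inr ζ) = c (Sum.inl p)) :
    ¬ (satGraph f).Adj (Sum.inl p) (Sum.inr ζ) := by
  intro hadj
  have hcard := fib_card_eq f c hc (c (Sum.inl p))
  rw [Finset.card_eq_two] at hcard
  obtain ⟨x, y, hxy, hset⟩ := hcard
  have hpmem : p ∈ fib c (c (Sum.inl p)) := by simp [fib]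
  rw [hset] at hpmem
  -- partner q
  obtain ⟨q, hqne, hqcol⟩ : ∃ q, q ≠ p ∧ c (Sum.inl q) = c (Sum.inl p) := by
    rcases Finset.mem_insert.1 hpmem with rfl | hpy
    · refine ⟨y, fun hy => hxy hy.symm, ?_⟩
      have : y ∈ fib c (c (Sum.inl p)) := by rw [hset]; simp
      simpa [fib] using this
    · have hpy' : p = y := Finset.mem_singleton.1 hpy
      subst hpy'
      refine ⟨x, hxy, ?_⟩
      have : x ∈ fib c (c (Sum.inl p)) := by rw [hset]; simp
      simpa [fib] using this
  have := two_le_def (satGraph f) c (Sum.inl p) (Sum.inl q) (Sum.inr ζ)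
    (adj_UU f p q (fun h => hqne h.symm)) hadj (by simp) hqcol hcol
  have := hc (Sum.inl p)
  omega

end Aux2
section Aux3

variable {n m : ℕ} (f : CNF3 n m) (c : SatVtx n m → Fin (2 * n))
  (hc : IsDefColoring (satGraph f) 1 c)

include hc

/-- the color class of `z_i^k` consists of two clique vertices of variable `i`
with labels different from `k` -/
lemma zpair (i : Fin n) (k : Fin 4) :
    ∃ k1 k2 : Fin 4, k1 ≠ k2 ∧ k1 ≠ k ∧ k2 ≠ k ∧
      fib c (c (Sum.inr (Sum.inl (i,k)))) = {(i,k1), (i,k2)} := by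
  set γ := c (Sum.inr (Sum.inl (i,k))) with hγ
  have hcard := fib_card_eq f c hc γ
  rw [Finset.card_eq_two] at hcard
  obtain ⟨x, y, hxy, hset⟩ := hcard
  have hx : c (Sum.inl x) = γ := by
    have : x ∈ fib c γ := by rw [hset]; simp
    simpa [fib] using this
  have hy : c (Sum.inl y) = γ := by
    have : y ∈ fib c γ := by rw [hset]; simp
    simpa [fib] using this
  have hxn : x.1 = i ∧ x.2 ≠ k := by
    have := no_cross f c hc x (Sum.inl (i,k)) hx.symm
    rw [show (Sum.inl x : SatVtx n m) = Sum.inl (x.1, x.2) by rfl, adj_UZ] at this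
    push_neg at this
    exact this
  have hyn : y.1 = i ∧ y.2 ≠ k := by
    have := no_cross f c hc y (Sum.inl (i,k)) hy.symm
    rw [show (Sum.inl y : SatVtx n m) = Sum.inl (y.1, y.2) by rfl, adj_UZ] at this
    push_neg at this
    exact this
  refine ⟨x.2, y.2, ?_, hxn.2, hyn.2, ?_⟩
  · intro h22
    exact hxy (Prod.ext (hxn.1.trans hyn.1.symm) h22)
  · rw [hset]
    have hx' : x = (i, x.2) := Prod.ext hxn.1 rfl
    have hy' : y = (i, y.2) := Prod.ext hyn.1 rfl
    rw [← hx', ← hy']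

end Aux3
section Aux4

variable {n m : ℕ} (f : CNF3 n m) (c : SatVtx n m → Fin (2 * n))
  (hc : IsDefColoring (satGraph f) 1 c)

include hc

lemma samevar (i : Fin n) (k : Fin 4) (q : Fin n × Fin 4)
    (hq : c (Sum.inl q) = c (Sum.inl (i,k))) : q.1 = i := by
  obtain ⟨k1, k2, h12, h10, h20, hset0⟩ := zpair f c hc i 0
  obtain ⟨k3, k4, h34, h31, h41, hset1⟩ := zpair f c hc i k1
  -- colors of the paired vertices
  have hc1 : c (Sum.inl (i,k1)) = c (Sum.inr (Sum.inl (i,(0:Fin 4)))) := by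
    have : (i,k1) ∈ fib c (c (Sum.inr (Sum.inl (i,(0:Fin 4))))) := by rw [hset0]; simp
    simpa [fib] using this
  have hc2 : c (Sum.inl (i,k2)) = c (Sum.inr (Sum.inl (i,(0:Fin 4)))) := by
    have : (i,k2) ∈ fib c (c (Sum.inr (Sum.inl (i,(0:Fin 4))))) := by rw [hset0]; simp
    simpa [fib] using this
  have hc3 : c (Sum.inl (i,k3)) = c (Sum.inr (Sum.inl (i,k1))) := by
    have : (i,k3) ∈ fib c (c (Sum.inr (Sum.inl (i,k1)))) := by rw [hset1]; simp
    simpa [fib] using this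
  have hc4 : c (Sum.inl (i,k4)) = c (Sum.inr (Sum.inl (i,k1))) := by
    have : (i,k4) ∈ fib c (c (Sum.inr (Sum.inl (i,k1)))) := by rw [hset1]; simp
    simpa [fib] using this
  -- the two pairs are disjoint
  have hdis : k3 ≠ k2 ∧ k4 ≠ k2 := by
    constructor
    · intro h
      have : c (Sum.inr (Sum.inl (i,k1))) = c (Sum.inr (Sum.inl (i,(0:Fin 4)))) := by
        rw [← hc3, h, hc2]
      rw [this, hset0] at hset1
      have : (i,k1) ∈ ({(i,k3), (i,k4)} : Finset (Fin n × Fin 4)) := by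
        rw [← hset1]; simp
      simp only [Finset.mem_insert, Finset.mem_singleton, Prod.mk.injEq, true_and] at this
      rcases this with h' | h'
      · exact h31 h'.symm
      · exact h41 h'.symm
    · intro h
      have : c (Sum.inr (Sum.inl (i,k1))) = c (Sum.inr (Sum.inl (i,(0:Fin 4)))) := by
        rw [← hc4, h, hc2]
      rw [this, hset0] at hset1
      have : (i,k1) ∈ ({(i,k3), (i,k4)} : Finset (Fin n × Fin 4)) := by
        rw [← hset1]; simp
      simp only [Finset.mem_insert, Finset.mem_singleton, Prod.mk.injEq, true_and] at this
      rcases this with h' | h'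
      · exact h31 h'.symm
      · exact h41 h'.symm
  obtain ⟨h32, h42⟩ := hdis
  -- k1,k2,k3,k4 cover Fin 4
  have cover : k = k1 ∨ k = k2 ∨ k = k3 ∨ k = k4 := by
    have e12 : k1.val ≠ k2.val := fun h => h12 (Fin.ext h)
    have e13 : k1.val ≠ k3.val := fun h => h31 (Fin.ext h.symm)
    have e14 : k1.val ≠ k4.val := fun h => h41 (Fin.ext h.symm)
    have e23 : k2.val ≠ k3.val := fun h => h32 (Fin.ext h.symm)
    have e24 : k2.val ≠ k4.val := fun h => h42 (Fin.ext h.symm)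
    have e34 : k3.val ≠ k4.val := fun h => h34 (Fin.ext h)
    have l1 := k1.isLt; have l2 := k2.isLt; have l3 := k3.isLt; have l4 := k4.isLt
    have lk := k.isLt
    have : k.val = k1.val ∨ k.val = k2.val ∨ k.val = k3.val ∨ k.val = k4.val := by omega
    rcases this with h|h|h|h
    · exact Or.inl (Fin.ext h)
    · exact Or.inr (Or.inl (Fin.ext h))
    · exact Or.inr (Or.inr (Or.inl (Fin.ext h)))
    · exact Or.inr (Or.inr (Or.inr (Fin.ext h)))
  -- in each case q lies in the corresponding fiber
  have key : ∀ γ kk1 kk2, fib c γ = {(i,kk1), (i,kk2)} → c (Sum.inl q) = γ → q.1 = i := by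
    intro γ kk1 kk2 hset hcq
    have : q ∈ fib c γ := by simp [fib, hcq]
    rw [hset] at this
    simp only [Finset.mem_insert, Finset.mem_singleton] at this
    rcases this with rfl | rfl <;> rfl
  rcases cover with rfl | rfl | rfl | rfl
  · exact key _ _ _ hset0 (hq.trans hc1)
  · exact key _ _ _ hset0 (hq.trans hc2)
  · exact key _ _ _ hset1 (hq.trans hc3)
  · exact key _ _ _ hset1 (hq.trans hc4)

end Aux4

/-- If `G(f)` admits a `(2n,1)`-coloring, then the 3CNF formula `f` is satisfiable. -/
theorem stmt13 {n m : ℕ} (f : CNF3 n m)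
    (h : ∃ c : SatVtx n m → Fin (2 * n), IsDefColoring (satGraph f) 1 c) :
    ∃ s : Fin n → Bool, f.Satisfies s := by
  obtain ⟨c, hc⟩ := h
  refine ⟨fun i => decide (c (Sum.inl (i, (0:Fin 4))) = c (Sum.inl (i, (1:Fin 4)))), ?_⟩
  intro j
  set γ := c (Sum.inr (Sum.inr j)) with hγ
  have hcard := fib_card_eq f c hc γ
  rw [Finset.card_eq_two] at hcard
  obtain ⟨x, y, hxy, hset⟩ := hcard
  have hx : c (Sum.inl x) = γ := by
    have : x ∈ fib c γ := by rw [hset]; simp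
    simpa [fib] using this
  have hy : c (Sum.inl y) = γ := by
    have : y ∈ fib c γ := by rw [hset]; simp
    simpa [fib] using this
  -- both x and y are non-neighbors of v_j
  have hexx : ∃ a : Fin 3, (f.lit j a).1 = x.1 ∧
      (((f.lit j a).2 = true ∧ (x.2 = 0 ∨ x.2 = 1)) ∨
       ((f.lit j a).2 = false ∧ (x.2 = 0 ∨ x.2 = 2))) := by
    have hA := no_cross f c hc x (Sum.inr j) hx.symm
    rw [show (Sum.inl x : SatVtx n m) = Sum.inl (x.1, x.2) by rfl, adj_UV] at hA
    exact not_not.mp hA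
  have hexy : ∃ a : Fin 3, (f.lit j a).1 = y.1 ∧
      (((f.lit j a).2 = true ∧ (y.2 = 0 ∨ y.2 = 1)) ∨
       ((f.lit j a).2 = false ∧ (y.2 = 0 ∨ y.2 = 2))) := by
    have hA := no_cross f c hc y (Sum.inr j) hy.symm
    rw [show (Sum.inl y : SatVtx n m) = Sum.inl (y.1, y.2) by rfl, adj_UV] at hA
    exact not_not.mp hA
  obtain ⟨a, ha1, ha2⟩ := hexx
  obtain ⟨a', hb1, hb2⟩ := hexy
  -- same variable
  have hsame : y.1 = x.1 := by
    have : c (Sum.inl y) = c (Sum.inl (x.1, x.2)) := hy.trans hx.symm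
    exact samevar f c hc x.1 x.2 y this
  have haa : a' = a := f.distinct j (by
    show (f.lit j a').1 = (f.lit j a).1
    rw [hb1, ha1, hsame])
  subst haa
  have hne2 : x.2 ≠ y.2 := by
    intro h22
    exact hxy (Prod.ext hsame.symm h22)
  have colxy : ∀ kk : Fin 4,
      (x.2 = kk → c (Sum.inl (x.1, kk)) = γ) ∧ (y.2 = kk → c (Sum.inl (x.1, kk)) = γ) := by
    intro kk
    constructor
    · rintro rfl; exact hx
    · rintro rfl
      have hyx : ((x.1, y.2) : Fin n × Fin 4) = y := Prod.ext hsame.symm rfl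
      rw [hyx]; exact hy
  refine ⟨a', ?_⟩
  rw [ha1]
  rcases ha2 with ⟨hbt, hx2⟩ | ⟨hbf, hx2⟩
  · -- positive literal
    have hy2 : y.2 = 0 ∨ y.2 = 1 := by
      rcases hb2 with ⟨_, h'⟩ | ⟨hbf, _⟩
      · exact h'
      · rw [hbt] at hbf; exact absurd hbf (by simp)
    have hEq : c (Sum.inl (x.1,(0:Fin 4))) = c (Sum.inl (x.1,(1:Fin 4))) := by
      rcases hx2 with h | h <;> rcases hy2 with h' | h'
      · exact absurd (h.trans h'.symm) hne2
      · rw [(colxy 0).1 h, (colxy 1).2 h']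
      · rw [(colxy 0).2 h', (colxy 1).1 h]
      · exact absurd (h.trans h'.symm) hne2
    rw [hbt]
    exact decide_eq_true hEq
  · -- negative literal
    have hy2 : y.2 = 0 ∨ y.2 = 2 := by
      rcases hb2 with ⟨hbt, _⟩ | ⟨_, h'⟩
      · rw [hbf] at hbt; exact absurd hbt (by simp)
      · exact h'
    have hEq02 : c (Sum.inl (x.1,(0:Fin 4))) = c (Sum.inl (x.1,(2:Fin 4))) := by
      rcases hx2 with h | h <;> rcases hy2 with h' | h'
      · exact absurd (h.trans h'.symm) hne2
      · rw [(colxy 0).1 h, (colxy 2).2 h']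
      · rw [(colxy 0).2 h', (colxy 2).1 h]
      · exact absurd (h.trans h'.symm) hne2
    have hne01 : ¬ (c (Sum.inl (x.1,(0:Fin 4))) = c (Sum.inl (x.1,(1:Fin 4)))) := by
      intro hEq01
      have h12 : ((x.1,(1:Fin 4)) : Fin n × Fin 4) ≠ (x.1,(2:Fin 4)) := by
        intro hh; simpa using congrArg Prod.snd hh
      have := two_le_def (satGraph f) c (Sum.inl (x.1,(0:Fin 4)))
        (Sum.inl (x.1,(1:Fin 4))) (Sum.inl (x.1,(2:Fin 4)))
        (adj_UU f _ _ (by intro hh; simpa using congrArg Prod.snd hh))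
        (adj_UU f _ _ (by intro hh; simpa using congrArg Prod.snd hh))
        (fun hh => h12 (Sum.inl.inj hh)) hEq01.symm hEq02.symm
      have := hc (Sum.inl (x.1,(0:Fin 4)))
      omega
    rw [hbf]
    exact decide_eq_false hne01
end

section
/- Fix an integer C ≥ 2 and let (U,F) be a 3-Set Splitting instance with |F| ≥ 3. If the split graph H(U,F,C) admits a (C, |F|+1)-coloring, then (U,F) admits a splitting. -/
/-- A splitting of a set family `F` over a universe `α`: a partition `(A, Aᶜ)` of the
universe such that every member of `F` meets both sides. -/
def HasSplitting {α : Type*} [DecidableEq α] (F : Finset (Finset α)) : Prop :=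
  ∃ A : Finset α, ∀ S ∈ F, (S ∩ A).Nonempty ∧ (S \ A).Nonempty

/-- Vertices of the split graph `H(U,F,C)`: the clique side consists of
`K₁ = {v_S^1 : S ∈ F}` (tagged `false`), `K₂ = {v_S^2 : S ∈ F}` (tagged `true`) and
`K*` of size `(C-2)·(|F|+2)`; the independent side consists of `I = {w_x : x ∈ U}` and
`Z₁` (tagged `false`), `Z₂` (tagged `true`) of size `C·(|F|+2)` each. -/
abbrev SplitVtx (α : Type*) (F : Finset (Finset α)) (C : ℕ) :=
  ((Bool × {S // S ∈ F}) ⊕ Fin ((C - 2) * (F.card + 2))) ⊕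
    (α ⊕ (Bool × Fin (C * (F.card + 2))))

/-- The edges of `H(U,F,C)`, oriented from the clique side: `K₁ ∪ K₂ ∪ K*` is a clique
and `I ∪ Z₁ ∪ Z₂` is independent; `w_x` is adjacent to `v_S^1, v_S^2` iff `x ∈ S`;
each vertex of `K_i` is adjacent to each vertex of `Z_i`; each vertex of `K*` is
adjacent to every other vertex; there are no other edges. -/
def splitRel (α : Type*) (F : Finset (Finset α)) (C : ℕ) :
    SplitVtx α F C → SplitVtx α F C → Prop
  | Sum.inl (Sum.inl _), Sum.inl _ => True
  | Sum.inl (Sum.inr _), Sum.inl _ => True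
  | Sum.inl (Sum.inl (_, S)), Sum.inr (Sum.inl x) => x ∈ S.val
  | Sum.inl (Sum.inl (b, _)), Sum.inr (Sum.inr (bz, _)) => b = bz
  | Sum.inl (Sum.inr _), Sum.inr _ => True
  | Sum.inr _, _ => False

/-- The split graph `H(U,F,C)`. -/
def splitGraph (α : Type*) (F : Finset (Finset α)) (C : ℕ) :
    SimpleGraph (SplitVtx α F C) :=
  SimpleGraph.fromRel (splitRel α F C)

/-!
In a `(C, D)`-colouring, a monochromatic vertex set containing a vertex adjacent to all the
others has at most `D + 1 = |F| + 2` elements. If every colour occurred on `K_i ∪ K*`, each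
colour class of `K ∪ Z_i` would contain such a dominating vertex, so the `C` classes could hold
only `C·(|F| + 2)` of its `2·C·(|F| + 2) - 4` vertices; hence some colour `a` avoids `K₁ ∪ K*`
and some `b` avoids `K₂ ∪ K*`. They differ, since `C - 1` colour classes cannot cover the clique
`K` once `|F| ≥ 3`. The `C - 2` remaining colours then fill `K*` completely, so every vertex
outside `K*` is coloured `a` or `b`: `K₁` is coloured `b` and `K₂` is coloured `a`. A set
`S ∈ F` coloured entirely `b` (resp. `a`) would give `v_S^1` (resp. `v_S^2`) `|F| + 2`
neighbours of its own colour, so `{x | w_x has colour a}` splits `F`.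
-/

open Finset

namespace IsDefColoring

variable {V β : Type*} [Finite V] {G : SimpleGraph V} {D : ℕ} {c : V → β}

theorem card_le_of_dominated_monochromatic (hc : IsDefColoring G D c) {s : Finset V} {v : V}
    (hv : v ∈ s) (hadj : ∀ w ∈ s, w ≠ v → G.Adj v w) (hcol : ∀ w ∈ s, c w = c v) :
    #s ≤ D + 1 := by
  classical
  have hsub : ((s.erase v : Finset V) : Set V) ⊆ {w | G.Adj v w ∧ c w = c v} := fun w hw =>
    ⟨hadj w (mem_of_mem_erase hw) (ne_of_mem_erase hw), hcol w (mem_of_mem_erase hw)⟩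
  calc #s = ((s.erase v : Finset V) : Set V).ncard + 1 := by
        rw [Set.ncard_coe_finset, card_erase_add_one hv]
    _ ≤ deficiency G c v + 1 := by
        gcongr
        exact Set.ncard_le_ncard hsub (Set.toFinite _)
    _ ≤ D + 1 := by
        gcongr
        exact hc v

theorem card_le_mul_card_of_dominated [DecidableEq β] (hc : IsDefColoring G D c) {s : Finset V}
    {t : Finset β} (hst : ∀ w ∈ s, c w ∈ t)
    (hdom : ∀ w ∈ s, ∃ v ∈ s, c v = c w ∧ ∀ u ∈ s, u ≠ v → c u = c w → G.Adj v u) :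
    #s ≤ (D + 1) * #t := by
  refine card_le_mul_card_image_of_maps_to hst _ fun i _ => ?_
  by_cases hi : ∃ w ∈ s, c w = i
  · obtain ⟨w, hw, rfl⟩ := hi
    obtain ⟨v, hv, hvw, hadj⟩ := hdom w hw
    refine hc.card_le_of_dominated_monochromatic (mem_filter.mpr ⟨hv, hvw⟩)
      (fun u hu huv => ?_) (fun u hu => ?_)
    · rw [mem_filter] at hu
      exact hadj u hu.1 huv hu.2
    · rw [hvw, (mem_filter.mp hu).2]
  · simp only [not_exists, not_and] at hi
    simp [filter_false_of_mem hi]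

theorem card_le_mul_card_of_isClique [DecidableEq β] (hc : IsDefColoring G D c)
    {s : Finset V} (hs : G.IsClique (s : Set V)) {t : Finset β} (hst : ∀ w ∈ s, c w ∈ t) :
    #s ≤ (D + 1) * #t :=
  hc.card_le_mul_card_of_dominated hst fun w hw =>
    ⟨w, hw, rfl, fun _ hu huw _ => hs (mem_coe.mpr hw) (mem_coe.mpr hu) huw.symm⟩

end IsDefColoring

namespace SplitGraph

variable {α : Type*} {F : Finset (Finset α)} {C : ℕ}

-- `sideClique false`, `sideClique true`, `starClique`, `clique`, `sideIndep b` and `elemVtxs S`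
-- are the paper's `K₁`, `K₂`, `K*`, `K₁ ∪ K₂ ∪ K*`, `Z_b` and `{w_x : x ∈ S}`.

def sideClique (b : Bool) : Finset (SplitVtx α F C) :=
  univ.map ⟨fun S => .inl (.inl (b, S)), fun _ _ h => by simpa using h⟩

def starClique : Finset (SplitVtx α F C) :=
  univ.map ⟨fun j => .inl (.inr j), fun _ _ h => by simpa using h⟩

def clique : Finset (SplitVtx α F C) :=
  univ.map ⟨.inl, Sum.inl_injective⟩

def sideIndep (b : Bool) : Finset (SplitVtx α F C) :=
  univ.map ⟨fun j => .inr (.inr (b, j)), fun _ _ h => by simpa using h⟩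

def elemVtxs (S : Finset α) : Finset (SplitVtx α F C) :=
  S.map ⟨fun x => .inr (.inl x), fun _ _ h => by simpa using h⟩

theorem card_sideClique (b : Bool) : #(sideClique b : Finset (SplitVtx α F C)) = #F := by
  simp [sideClique]

theorem card_starClique : #(starClique : Finset (SplitVtx α F C)) = (C - 2) * (#F + 2) := by
  simp [starClique]

theorem card_clique : #(clique : Finset (SplitVtx α F C)) = 2 * #F + (C - 2) * (#F + 2) := by
  simp [clique]

theorem card_sideIndep (b : Bool) : #(sideIndep b : Finset (SplitVtx α F C)) = C * (#F + 2) := by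
  simp [sideIndep]

theorem card_elemVtxs (S : Finset α) : #(elemVtxs S : Finset (SplitVtx α F C)) = #S := by
  simp [elemVtxs]

theorem sideClique_subset_clique (b : Bool) :
    (sideClique b : Finset (SplitVtx α F C)) ⊆ clique := by
  intro v hv
  simp only [sideClique, mem_map, mem_univ, true_and] at hv
  obtain ⟨S, rfl⟩ := hv
  exact mem_map_of_mem _ (mem_univ _)

theorem starClique_subset_clique : (starClique : Finset (SplitVtx α F C)) ⊆ clique := by
  intro v hv
  simp only [starClique, mem_map, mem_univ, true_and] at hv
  obtain ⟨j, rfl⟩ := hv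
  exact mem_map_of_mem _ (mem_univ _)

theorem notMem_starClique_of_mem_sideClique {b : Bool} {v : SplitVtx α F C}
    (hv : v ∈ sideClique b) : v ∉ starClique := by
  simp only [sideClique, mem_map, mem_univ, true_and] at hv
  obtain ⟨S, rfl⟩ := hv
  intro hv
  obtain ⟨j, -, hj⟩ := mem_map.mp hv
  cases hj

theorem notMem_starClique_of_mem_elemVtxs {S : Finset α} {v : SplitVtx α F C}
    (hv : v ∈ elemVtxs S) : v ∉ starClique := by
  simp only [elemVtxs, mem_map] at hv
  obtain ⟨x, -, rfl⟩ := hv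
  simp [starClique]

theorem mem_sideClique_or_mem_starClique {v : SplitVtx α F C} (hv : v ∈ clique) :
    v ∈ sideClique false ∨ v ∈ sideClique true ∨ v ∈ starClique := by
  rcases v with ((⟨_ | _, S⟩ | j) | _)
  · exact .inl (mem_map_of_mem _ (mem_univ S))
  · exact .inr (.inl (mem_map_of_mem _ (mem_univ S)))
  · exact .inr (.inr (mem_map_of_mem _ (mem_univ j)))
  · simp [clique] at hv

theorem isClique_clique :
    (splitGraph α F C).IsClique ((clique : Finset (SplitVtx α F C)) : Set _) := by
  rintro _ hu _ hv huv
  simp only [clique, coe_map, Set.mem_image, Function.Embedding.coeFn_mk] at hu hv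
  obtain ⟨u, -, rfl⟩ := hu
  obtain ⟨v, -, rfl⟩ := hv
  refine SimpleGraph.fromRel_adj _ _ _ |>.mpr ⟨huv, .inl ?_⟩
  rcases u with _ | _ <;> trivial

theorem adj_of_mem_starClique {v : SplitVtx α F C} (hv : v ∈ starClique) {u : SplitVtx α F C}
    (huv : u ≠ v) : (splitGraph α F C).Adj v u := by
  simp only [starClique, mem_map, mem_univ, true_and] at hv
  obtain ⟨j, rfl⟩ := hv
  refine SimpleGraph.fromRel_adj _ _ _ |>.mpr ⟨huv.symm, .inl ?_⟩
  rcases u with _ | _ <;> trivial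

theorem adj_of_mem_sideClique_of_mem_sideIndep {b : Bool} {v u : SplitVtx α F C}
    (hv : v ∈ sideClique b) (hu : u ∈ sideIndep b) : (splitGraph α F C).Adj v u := by
  simp only [sideClique, sideIndep, mem_map, mem_univ, true_and] at hv hu
  obtain ⟨S, rfl⟩ := hv
  obtain ⟨j, rfl⟩ := hu
  exact SimpleGraph.fromRel_adj _ _ _ |>.mpr ⟨by simp, .inl rfl⟩

theorem adj_of_mem_elemVtxs (b : Bool) {S : Finset α} (hS : S ∈ F) {u : SplitVtx α F C}
    (hu : u ∈ elemVtxs S) : (splitGraph α F C).Adj (.inl (.inl (b, ⟨S, hS⟩))) u := by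
  simp only [elemVtxs, mem_map] at hu
  obtain ⟨x, hx, rfl⟩ := hu
  exact SimpleGraph.fromRel_adj _ _ _ |>.mpr ⟨by simp, .inl hx⟩

section Coloring

variable [Fintype α] {c : SplitVtx α F C → Fin C}

theorem exists_color_avoiding_sideClique_starClique
    (hc : IsDefColoring (splitGraph α F C) (#F + 1) c) (hF : 0 < #F) (b : Bool) :
    ∃ a, (∀ v ∈ sideClique b, c v ≠ a) ∧ ∀ v ∈ starClique, c v ≠ a := by
  classical
  by_contra h
  set s : Finset (SplitVtx α F C) := clique ∪ sideIndep b
  have hdom : ∀ w ∈ s, ∃ v ∈ s, c v = c w ∧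
      ∀ u ∈ s, u ≠ v → c u = c w → (splitGraph α F C).Adj v u := by
    intro w _
    obtain ⟨v, hv, hvw⟩ : ∃ v, (v ∈ sideClique b ∨ v ∈ starClique) ∧ c v = c w := by
      by_contra h'
      push Not at h'
      exact h ⟨c w, fun v hv => h' v (.inl hv), fun v hv => h' v (.inr hv)⟩
    have hv_clique : v ∈ clique :=
      hv.elim (sideClique_subset_clique b ·) (starClique_subset_clique ·)
    refine ⟨v, mem_union_left _ hv_clique, hvw, fun u hu huv _ => ?_⟩
    rcases hv with hv | hv
    · rcases mem_union.mp hu with hu | hu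
      · exact isClique_clique hv_clique hu huv.symm
      · exact adj_of_mem_sideClique_of_mem_sideIndep hv hu
    · exact adj_of_mem_starClique hv huv
  have hdisj : Disjoint (clique : Finset (SplitVtx α F C)) (sideIndep b) := by
    simp [disjoint_left, clique, sideIndep]
  have hs := hc.card_le_mul_card_of_dominated (t := univ) (fun _ _ => mem_univ _) hdom
  rw [card_union_of_disjoint hdisj, card_clique, card_sideIndep, card_univ,
    Fintype.card_fin] at hs
  nlinarith

theorem exists_mem_clique_color_eq (hc : IsDefColoring (splitGraph α F C) (#F + 1) c)
    (hF : 2 < #F) (a : Fin C) : ∃ v ∈ clique, c v = a := by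
  by_contra h
  push Not at h
  have hs := hc.card_le_mul_card_of_isClique isClique_clique (t := univ.erase a)
    fun v hv => mem_erase.mpr ⟨h v hv, mem_univ _⟩
  rw [card_clique, card_erase_of_mem (mem_univ a), card_univ, Fintype.card_fin] at hs
  obtain ⟨k, rfl⟩ : ∃ k, C = k + 1 := ⟨C - 1, by have := a.pos; omega⟩
  rcases k with _ | k
  · simp at hs
    simp [hs] at hF
  · rw [show k + 1 + 1 - 2 = k by omega, show k + 1 + 1 - 1 = k + 1 by omega] at hs
    nlinarith

theorem color_eq_or_eq_of_notMem_starClique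
    (hc : IsDefColoring (splitGraph α F C) (#F + 1) c) {a b : Fin C} (hab : a ≠ b)
    (ha : ∀ v ∈ starClique, c v ≠ a) (hb : ∀ v ∈ starClique, c v ≠ b) :
    ∀ u ∉ starClique, c u = a ∨ c u = b := by
  classical
  intro u hu
  by_contra h
  push Not at h
  set s := cons u starClique hu
  have hst : ∀ w ∈ s, c w ∈ ({a, b} : Finset (Fin C))ᶜ := by
    intro w hw
    rcases mem_cons.mp hw with rfl | hw
    · simpa using h
    · simpa using ⟨ha w hw, hb w hw⟩
  -- a colour class of `s` either meets `K*`, whose vertices see everything, or is `{u}`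
  have hdom : ∀ w ∈ s, ∃ v ∈ s, c v = c w ∧
      ∀ u' ∈ s, u' ≠ v → c u' = c w → (splitGraph α F C).Adj v u' := by
    intro w hw
    by_cases hstar : ∃ v ∈ starClique, c v = c w
    · obtain ⟨v, hv, hvw⟩ := hstar
      exact ⟨v, mem_cons_of_mem hv, hvw, fun u' _ hu'v _ => adj_of_mem_starClique hv hu'v⟩
    · refine ⟨w, hw, rfl, fun u' hu' hu'w hcol => absurd ⟨u', ?_, hcol⟩ hstar⟩
      rcases mem_cons.mp hw with rfl | hw
      · exact (mem_cons.mp hu').resolve_left hu'w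
      · exact absurd ⟨w, hw, rfl⟩ hstar
  have hs := hc.card_le_mul_card_of_dominated hst hdom
  rw [card_cons, card_starClique, card_compl, card_pair hab, Fintype.card_fin] at hs
  nlinarith

theorem exists_mem_elemVtxs_color_ne (hc : IsDefColoring (splitGraph α F C) (#F + 1) c)
    {S : Finset α} (hS : S ∈ F) (hS3 : 3 ≤ #S) {b : Bool} {a : Fin C}
    (hside : ∀ v ∈ sideClique b, c v = a) : ∃ u ∈ elemVtxs S, c u ≠ a := by
  classical
  by_contra h
  push Not at h
  set v : SplitVtx α F C := .inl (.inl (b, ⟨S, hS⟩))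
  have hv : v ∈ sideClique b := mem_map_of_mem _ (mem_univ _)
  have hs := hc.card_le_of_dominated_monochromatic (s := sideClique b ∪ elemVtxs S)
    (mem_union_left _ hv)
    (fun u hu huv => (mem_union.mp hu).elim
      (fun hu => isClique_clique (sideClique_subset_clique b hv)
        (sideClique_subset_clique b hu) huv.symm)
      (adj_of_mem_elemVtxs b hS))
    (fun u hu => by rw [hside v hv]; exact (mem_union.mp hu).elim (hside u) (h u))
  have hdisj : Disjoint (sideClique b : Finset (SplitVtx α F C)) (elemVtxs S) := by
    simp [disjoint_left, sideClique, elemVtxs]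
  rw [card_union_of_disjoint hdisj, card_sideClique, card_elemVtxs] at hs
  omega

end Coloring

end SplitGraph

open SplitGraph in
theorem stmt18_general {α : Type*} [Fintype α] [DecidableEq α] (C : ℕ)
    (F : Finset (Finset α)) (hF : ∀ S ∈ F, S.card = 3) (hF3 : 3 ≤ F.card)
    (h : ∃ c : SplitVtx α F C → Fin C,
      IsDefColoring (splitGraph α F C) (F.card + 1) c) :
    HasSplitting F := by
  obtain ⟨c, hc⟩ := h
  obtain ⟨a, ha₁, ha⟩ := exists_color_avoiding_sideClique_starClique hc (by omega) false
  obtain ⟨b, hb₂, hb⟩ := exists_color_avoiding_sideClique_starClique hc (by omega) true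
  have hab : a ≠ b := by
    rintro rfl
    obtain ⟨v, hv, hva⟩ := exists_mem_clique_color_eq hc (by omega) a
    rcases mem_sideClique_or_mem_starClique hv with hv | hv | hv
    exacts [ha₁ v hv hva, hb₂ v hv hva, ha v hv hva]
  have hcol := color_eq_or_eq_of_notMem_starClique hc hab ha hb
  have hK₁ : ∀ v ∈ sideClique false, c v = b := fun v hv =>
    (hcol v (notMem_starClique_of_mem_sideClique hv)).resolve_left (ha₁ v hv)
  have hK₂ : ∀ v ∈ sideClique true, c v = a := fun v hv =>
    (hcol v (notMem_starClique_of_mem_sideClique hv)).resolve_right (hb₂ v hv)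
  refine ⟨univ.filter fun x => c (.inr (.inl x)) = a, fun S hS => ⟨?_, ?_⟩⟩
  · obtain ⟨_, hu, hub⟩ := exists_mem_elemVtxs_color_ne hc hS (hF S hS).ge hK₁
    obtain ⟨x, hx, rfl⟩ := mem_map.mp hu
    have hxa := (hcol _ (notMem_starClique_of_mem_elemVtxs hu)).resolve_right hub
    exact ⟨x, mem_inter.mpr ⟨hx, mem_filter.mpr ⟨mem_univ x, hxa⟩⟩⟩
  · obtain ⟨_, hu, hua⟩ := exists_mem_elemVtxs_color_ne hc hS (hF S hS).ge hK₂
    obtain ⟨y, hy, rfl⟩ := mem_map.mp hu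
    exact ⟨y, mem_sdiff.mpr ⟨hy, fun hmem => hua (mem_filter.mp hmem).2⟩⟩

/-- For `C ≥ 2` and `|F| ≥ 3`: if `H(U,F,C)` admits a `(C, |F|+1)`-coloring, then the
3-Set Splitting instance `(U,F)` admits a splitting. -/
theorem stmt18 {α : Type*} [Fintype α] [DecidableEq α] (C : ℕ) (hC : 2 ≤ C)
    (F : Finset (Finset α)) (hF : ∀ S ∈ F, S.card = 3) (hF3 : 3 ≤ F.card)
    (h : ∃ c : SplitVtx α F C → Fin C,
      IsDefColoring (splitGraph α F C) (F.card + 1) c) :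
    HasSplitting F :=
  stmt18_general C F hF hF3 h
end

section
/- Fix an integer C ≥ 2 and let (U,F) be a 3-Set Splitting instance with |F| ≥ 3, and set D = |F|+1. In any (C,D)-coloring of the split graph H(U,F,C), all vertices of K_1 receive one common color, all vertices of K_2 receive one common color distinct from that of K_1, and each of the remaining C−2 colors is used on exactly D+1 vertices of K*. -/
/- ### Auxiliary machinery -/

/-- A deficiency lower bound: any finset of same-colored neighbors, injected into the
vertex set, bounds the deficiency from below. -/
lemma card_le_deficiency {V β γ : Type*} [Finite V] (G : SimpleGraph V)
    (c : V → γ) (v : V) (s : Finset β) (f : β → V)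
    (hinj : Set.InjOn f s)
    (h : ∀ b ∈ s, G.Adj v (f b) ∧ c (f b) = c v) :
    s.card ≤ deficiency G c v := by
  classical
  have h1 : (f '' ↑s).ncard = s.card := by
    rw [Set.ncard_image_of_injOn hinj, Set.ncard_coe_finset]
  rw [deficiency, ← h1]
  apply Set.ncard_le_ncard _ (Set.toFinite _)
  rintro w ⟨b, hb, rfl⟩
  exact h b (by simpa using hb)

/-- The number of elements of `β` that `f` sends to color `e`. -/
def cnt {β γ : Type*} [Fintype β] [DecidableEq γ] (f : β → γ) (e : γ) : ℕ :=
  (Finset.univ.filter fun b => f b = e).card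

lemma sum_cnt {β γ : Type*} [Fintype β] [Fintype γ] [DecidableEq γ] (f : β → γ) :
    ∑ e, cnt f e = Fintype.card β := by
  unfold cnt
  rw [← Finset.card_univ]
  exact (Finset.card_eq_sum_card_fiberwise (fun b _ => Finset.mem_univ (f b))).symm

lemma exists_cnt_ge {β : Type*} [Fintype β] {C : ℕ} (hC : 0 < C) (f : β → Fin C) (n : ℕ)
    (hcard : C * n ≤ Fintype.card β) : ∃ e, n ≤ cnt f e := by
  by_contra hcon
  push_neg at hcon
  have hn : 0 < n := by
    have := hcon ⟨0, hC⟩; omega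
  have h1 : ∑ e, cnt f e ≤ ∑ _e : Fin C, (n - 1) :=
    Finset.sum_le_sum fun e _ => by have := hcon e; omega
  rw [sum_cnt] at h1
  simp only [Finset.sum_const, Finset.card_univ, Fintype.card_fin, smul_eq_mul] at h1
  have h2 : C * n ≤ C * (n - 1) := le_trans hcard h1
  have := Nat.le_of_mul_le_mul_left h2 hC
  omega

section Adjacency

variable {α : Type*} {F : Finset (Finset α)} {C : ℕ}

lemma adj_clique (k k' : (Bool × {S // S ∈ F}) ⊕ Fin ((C - 2) * (F.card + 2)))
    (h : k ≠ k') : (splitGraph α F C).Adj (Sum.inl k) (Sum.inl k') := by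
  rw [splitGraph, SimpleGraph.fromRel_adj]
  refine ⟨by simpa using h, Or.inl ?_⟩
  rcases k with ⟨b, S⟩ | i <;> trivial

lemma adj_kstar (i : Fin ((C - 2) * (F.card + 2))) (w : SplitVtx α F C)
    (h : Sum.inl (Sum.inr i) ≠ w) : (splitGraph α F C).Adj (Sum.inl (Sum.inr i)) w := by
  rw [splitGraph, SimpleGraph.fromRel_adj]
  refine ⟨h, Or.inl ?_⟩
  rcases w with k | z <;> trivial

lemma adj_KZ (b : Bool) (S : {S // S ∈ F}) (j : Fin (C * (F.card + 2))) :
    (splitGraph α F C).Adj (Sum.inl (Sum.inl (b, S))) (Sum.inr (Sum.inr (b, j))) := by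
  rw [splitGraph, SimpleGraph.fromRel_adj]
  exact ⟨by simp, Or.inl rfl⟩

end Adjacency

/-- For `C ≥ 2` and `|F| ≥ 3`, with `D = |F|+1`: in any `(C,D)`-coloring of
`H(U,F,C)`, all of `K₁` gets one color `a`, all of `K₂` gets one color `b ≠ a`, and
every other color is used on exactly `D+1` vertices of `K*`. -/
theorem stmt19 {α : Type*} [Fintype α] [DecidableEq α] (C : ℕ) (hC : 2 ≤ C)
    (F : Finset (Finset α)) (hF : ∀ S ∈ F, S.card = 3) (hF3 : 3 ≤ F.card)
    (c : SplitVtx α F C → Fin C)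
    (hc : IsDefColoring (splitGraph α F C) (F.card + 1) c) :
    ∃ a b : Fin C, a ≠ b ∧
      (∀ S : {S // S ∈ F}, c (Sum.inl (Sum.inl (false, S))) = a) ∧
      (∀ S : {S // S ∈ F}, c (Sum.inl (Sum.inl (true, S))) = b) ∧
      (∀ e : Fin C, e ≠ a → e ≠ b →
        {v : Fin ((C - 2) * (F.card + 2)) | c (Sum.inl (Sum.inr v)) = e}.ncard
          = F.card + 2) := by
  have hC0 : 0 < C := by omega
  -- block lemma: a color appearing ≥ |F|+2 times on Z_b is forbidden on all
  -- vertices adjacent to all of Z_b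
  have hblock : ∀ (bo : Bool) (e : Fin C) (v : SplitVtx α F C),
      F.card + 2 ≤ cnt (fun j : Fin (C * (F.card + 2)) =>
        c (Sum.inr (Sum.inr (bo, j)))) e →
      (∀ j, (splitGraph α F C).Adj v (Sum.inr (Sum.inr (bo, j)))) → c v ≠ e := by
    intro bo e v hbig hadj hce
    have hle := card_le_deficiency (splitGraph α F C) c v
      (Finset.univ.filter fun j => c (Sum.inr (Sum.inr (bo, j))) = e)
      (fun j => Sum.inr (Sum.inr (bo, j)))
      (by intro x _ y _ hxy; simpa using hxy)
      (by intro j hj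
          refine ⟨hadj j, ?_⟩
          rw [hce]
          exact (Finset.mem_filter.1 hj).2)
    have hv := hc v
    simp only [cnt] at hbig
    omega
  -- clique bound: each color used at most |F|+2 times on the clique
  have hKle : ∀ e, cnt (fun k : (Bool × {S // S ∈ F}) ⊕ Fin ((C - 2) * (F.card + 2)) =>
      c (Sum.inl k)) e ≤ F.card + 2 := by
    intro e
    by_cases h0 : (Finset.univ.filter
        fun k : (Bool × {S // S ∈ F}) ⊕ Fin ((C - 2) * (F.card + 2)) =>
          c (Sum.inl k) = e).Nonempty
    · obtain ⟨k₀, hk₀⟩ := h0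
      have hck₀ : c (Sum.inl k₀) = e := (Finset.mem_filter.1 hk₀).2
      have hle := card_le_deficiency (splitGraph α F C) c (Sum.inl k₀)
        ((Finset.univ.filter
          fun k : (Bool × {S // S ∈ F}) ⊕ Fin ((C - 2) * (F.card + 2)) =>
            c (Sum.inl k) = e).erase k₀)
        (fun k => Sum.inl k)
        (by intro x _ y _ hxy; simpa using hxy)
        (by intro k hk
            refine ⟨adj_clique k₀ k (Ne.symm (Finset.ne_of_mem_erase hk)), ?_⟩
            rw [(Finset.mem_filter.1 (Finset.mem_of_mem_erase hk)).2, hck₀])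
      rw [Finset.card_erase_of_mem hk₀] at hle
      have hv := hc (Sum.inl k₀)
      have hpos : 0 < (Finset.univ.filter
          fun k : (Bool × {S // S ∈ F}) ⊕ Fin ((C - 2) * (F.card + 2)) =>
            c (Sum.inl k) = e).card := Finset.card_pos.2 ⟨k₀, hk₀⟩
      simp only [cnt]
      omega
    · simp only [cnt]
      rw [Finset.not_nonempty_iff_eq_empty.1 h0]
      simp
  -- pigeonhole on Z₁ and Z₂
  obtain ⟨a, ha⟩ : ∃ e, F.card + 2 ≤ cnt (fun j : Fin (C * (F.card + 2)) =>
      c (Sum.inr (Sum.inr (false, j)))) e :=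
    exists_cnt_ge hC0 _ _ (by rw [Fintype.card_fin])
  obtain ⟨b, hb⟩ : ∃ e, F.card + 2 ≤ cnt (fun j : Fin (C * (F.card + 2)) =>
      c (Sum.inr (Sum.inr (true, j)))) e :=
    exists_cnt_ge hC0 _ _ (by rw [Fintype.card_fin])
  -- forbidden colors
  have hK1a : ∀ S : {S // S ∈ F}, c (Sum.inl (Sum.inl (false, S))) ≠ a :=
    fun S => hblock false a _ ha (fun j => adj_KZ false S j)
  have hK2b : ∀ S : {S // S ∈ F}, c (Sum.inl (Sum.inl (true, S))) ≠ b :=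
    fun S => hblock true b _ hb (fun j => adj_KZ true S j)
  have hKsa : ∀ i : Fin ((C - 2) * (F.card + 2)), c (Sum.inl (Sum.inr i)) ≠ a :=
    fun i => hblock false a _ ha (fun j => adj_kstar i _ (by simp))
  have hKsb : ∀ i : Fin ((C - 2) * (F.card + 2)), c (Sum.inl (Sum.inr i)) ≠ b :=
    fun i => hblock true b _ hb (fun j => adj_kstar i _ (by simp))
  -- total clique count
  have hsumK : ∑ e, cnt (fun k : (Bool × {S // S ∈ F}) ⊕ Fin ((C - 2) * (F.card + 2)) =>
      c (Sum.inl k)) e = 2 * F.card + (C - 2) * (F.card + 2) := by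
    rw [sum_cnt]
    simp [Fintype.card_coe, two_mul]
  -- a ≠ b
  have hab : a ≠ b := by
    intro habeq
    have hzero : ∀ k : (Bool × {S // S ∈ F}) ⊕ Fin ((C - 2) * (F.card + 2)),
        c (Sum.inl k) ≠ a := by
      rintro (⟨bo, S⟩ | i)
      · cases bo
        · exact hK1a S
        · rw [habeq]; exact hK2b S
      · exact hKsa i
    have hKa : cnt (fun k : (Bool × {S // S ∈ F}) ⊕ Fin ((C - 2) * (F.card + 2)) =>
        c (Sum.inl k)) a = 0 := by
      simp only [cnt]
      rw [Finset.card_eq_zero, Finset.filter_eq_empty_iff]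
      exact fun k _ => hzero k
    have hsplit := Finset.sum_sdiff (f := fun e => cnt
        (fun k : (Bool × {S // S ∈ F}) ⊕ Fin ((C - 2) * (F.card + 2)) =>
          c (Sum.inl k)) e) (Finset.subset_univ {a})
    rw [Finset.sum_singleton, hKa] at hsplit
    beta_reduce at hsplit
    have hbound : ∑ e ∈ Finset.univ \ {a}, cnt
        (fun k : (Bool × {S // S ∈ F}) ⊕ Fin ((C - 2) * (F.card + 2)) =>
          c (Sum.inl k)) e ≤ (C - 1) * (F.card + 2) := by
      have h1 := Finset.sum_le_card_nsmul (Finset.univ \ {a}) _ (F.card + 2)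
        (fun e _ => hKle e)
      have h2 : (Finset.univ \ ({a} : Finset (Fin C))).card = C - 1 := by
        rw [Finset.card_sdiff_of_subset (Finset.subset_univ _)]
        simp
      rw [smul_eq_mul, h2] at h1
      exact h1
    have hCm : (C - 1) * (F.card + 2) = (C - 2) * (F.card + 2) + (F.card + 2) := by
      have h2 : C - 1 = (C - 2) + 1 := by omega
      rw [h2, add_mul, one_mul]
    omega
  -- K* counts: a and b absent
  have hKs0a : cnt (fun i : Fin ((C - 2) * (F.card + 2)) =>
      c (Sum.inl (Sum.inr i))) a = 0 := by
    simp only [cnt]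
    rw [Finset.card_eq_zero, Finset.filter_eq_empty_iff]
    exact fun i _ => hKsa i
  have hKs0b : cnt (fun i : Fin ((C - 2) * (F.card + 2)) =>
      c (Sum.inl (Sum.inr i))) b = 0 := by
    simp only [cnt]
    rw [Finset.card_eq_zero, Finset.filter_eq_empty_iff]
    exact fun i _ => hKsb i
  have hsumKs : ∑ e, cnt (fun i : Fin ((C - 2) * (F.card + 2)) =>
      c (Sum.inl (Sum.inr i))) e = (C - 2) * (F.card + 2) := by
    rw [sum_cnt, Fintype.card_fin]
  have hT : (Finset.univ \ ({a, b} : Finset (Fin C))).card = C - 2 := by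
    rw [Finset.card_sdiff_of_subset (Finset.subset_univ _), Finset.card_pair hab]
    simp
  have hsumT : ∑ e ∈ Finset.univ \ ({a, b} : Finset (Fin C)),
      cnt (fun i : Fin ((C - 2) * (F.card + 2)) => c (Sum.inl (Sum.inr i))) e
        = (C - 2) * (F.card + 2) := by
    have hsplit := Finset.sum_sdiff (f := fun e => cnt
        (fun i : Fin ((C - 2) * (F.card + 2)) => c (Sum.inl (Sum.inr i))) e)
      (Finset.subset_univ {a, b})
    rw [Finset.sum_pair hab, hKs0a, hKs0b] at hsplit
    beta_reduce at hsplit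
    omega
  -- K* count is at most clique count
  have hle : ∀ e, cnt (fun i : Fin ((C - 2) * (F.card + 2)) =>
      c (Sum.inl (Sum.inr i))) e ≤ cnt
      (fun k : (Bool × {S // S ∈ F}) ⊕ Fin ((C - 2) * (F.card + 2)) =>
        c (Sum.inl k)) e := by
    intro e
    simp only [cnt]
    apply Finset.card_le_card_of_injOn (fun i => Sum.inr i)
    · intro i hi
      exact Finset.mem_filter.2 ⟨Finset.mem_univ _, (Finset.mem_filter.1 hi).2⟩
    · intro x _ y _ hxy
      simpa using hxy
  have hsumTK : ∑ e ∈ Finset.univ \ ({a, b} : Finset (Fin C)),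
      cnt (fun k : (Bool × {S // S ∈ F}) ⊕ Fin ((C - 2) * (F.card + 2)) =>
        c (Sum.inl k)) e = (C - 2) * (F.card + 2) := by
    have h1 : ∑ e ∈ Finset.univ \ ({a, b} : Finset (Fin C)),
        cnt (fun i : Fin ((C - 2) * (F.card + 2)) => c (Sum.inl (Sum.inr i))) e
          ≤ ∑ e ∈ Finset.univ \ ({a, b} : Finset (Fin C)),
        cnt (fun k : (Bool × {S // S ∈ F}) ⊕ Fin ((C - 2) * (F.card + 2)) =>
          c (Sum.inl k)) e := Finset.sum_le_sum (fun e _ => hle e)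
    have h2 : ∑ e ∈ Finset.univ \ ({a, b} : Finset (Fin C)),
        cnt (fun k : (Bool × {S // S ∈ F}) ⊕ Fin ((C - 2) * (F.card + 2)) =>
          c (Sum.inl k)) e
        ≤ (Finset.univ \ ({a, b} : Finset (Fin C))).card • (F.card + 2) :=
      Finset.sum_le_card_nsmul _ _ _ (fun e _ => hKle e)
    rw [smul_eq_mul, hT] at h2
    beta_reduce at h1
    omega
  -- each remaining color has exactly |F|+2 clique vertices, all in K*
  have hKeq : ∀ e ∈ Finset.univ \ ({a, b} : Finset (Fin C)),
      cnt (fun k : (Bool × {S // S ∈ F}) ⊕ Fin ((C - 2) * (F.card + 2)) =>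
        c (Sum.inl k)) e = F.card + 2 := by
    intro e he
    by_contra hne
    have hlt := lt_of_le_of_ne (hKle e) hne
    have hsum := Finset.sum_lt_sum (s := Finset.univ \ ({a, b} : Finset (Fin C)))
      (f := fun e => cnt (fun k : (Bool × {S // S ∈ F}) ⊕
        Fin ((C - 2) * (F.card + 2)) => c (Sum.inl k)) e)
      (g := fun _ => F.card + 2) (fun i _ => hKle i) ⟨e, he, hlt⟩
    rw [Finset.sum_const, smul_eq_mul, hT] at hsum
    beta_reduce at hsum
    omega
  have hKseq : ∀ e ∈ Finset.univ \ ({a, b} : Finset (Fin C)),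
      cnt (fun i : Fin ((C - 2) * (F.card + 2)) => c (Sum.inl (Sum.inr i))) e
        = cnt (fun k : (Bool × {S // S ∈ F}) ⊕ Fin ((C - 2) * (F.card + 2)) =>
          c (Sum.inl k)) e := by
    intro e he
    by_contra hne
    have hlt := lt_of_le_of_ne (hle e) hne
    have hsum := Finset.sum_lt_sum (s := Finset.univ \ ({a, b} : Finset (Fin C)))
      (f := fun e => cnt (fun i : Fin ((C - 2) * (F.card + 2)) =>
        c (Sum.inl (Sum.inr i))) e)
      (g := fun e => cnt (fun k : (Bool × {S // S ∈ F}) ⊕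
        Fin ((C - 2) * (F.card + 2)) => c (Sum.inl k)) e)
      (fun i _ => hle i) ⟨e, he, hlt⟩
    beta_reduce at hsum
    omega
  -- no K₁/K₂ vertex has a color outside {a,b}
  have hnopair : ∀ e ∈ Finset.univ \ ({a, b} : Finset (Fin C)),
      ∀ (bo : Bool) (S : {S // S ∈ F}), c (Sum.inl (Sum.inl (bo, S))) ≠ e := by
    intro e he bo S hcs
    have himg : ((Finset.univ.filter fun i : Fin ((C - 2) * (F.card + 2)) =>
        c (Sum.inl (Sum.inr i)) = e).image
          (Sum.inr : Fin ((C - 2) * (F.card + 2)) →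
            (Bool × {S // S ∈ F}) ⊕ Fin ((C - 2) * (F.card + 2)))).card
        = (Finset.univ.filter fun i : Fin ((C - 2) * (F.card + 2)) =>
            c (Sum.inl (Sum.inr i)) = e).card :=
      Finset.card_image_of_injective _ Sum.inr_injective
    have hnotmem : (Sum.inl (bo, S) : (Bool × {S // S ∈ F}) ⊕
        Fin ((C - 2) * (F.card + 2))) ∉
        (Finset.univ.filter fun i : Fin ((C - 2) * (F.card + 2)) =>
          c (Sum.inl (Sum.inr i)) = e).image Sum.inr := by
      simp
    have hsub : insert (Sum.inl (bo, S) : (Bool × {S // S ∈ F}) ⊕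
        Fin ((C - 2) * (F.card + 2)))
        ((Finset.univ.filter fun i : Fin ((C - 2) * (F.card + 2)) =>
          c (Sum.inl (Sum.inr i)) = e).image Sum.inr) ⊆
        Finset.univ.filter (fun k : (Bool × {S // S ∈ F}) ⊕
          Fin ((C - 2) * (F.card + 2)) => c (Sum.inl k) = e) := by
      intro k hk
      rcases Finset.mem_insert.1 hk with rfl | hk'
      · exact Finset.mem_filter.2 ⟨Finset.mem_univ _, hcs⟩
      · obtain ⟨i, hi, rfl⟩ := Finset.mem_image.1 hk'
        exact Finset.mem_filter.2 ⟨Finset.mem_univ _, (Finset.mem_filter.1 hi).2⟩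
    have hcard := Finset.card_le_card hsub
    rw [Finset.card_insert_of_notMem hnotmem, himg] at hcard
    have := hKseq e he
    simp only [cnt] at this
    omega
  -- K₁ is monochromatic with color b, K₂ with color a
  have hK1 : ∀ S : {S // S ∈ F}, c (Sum.inl (Sum.inl (false, S))) = b := by
    intro S
    by_contra hne
    have heT : c (Sum.inl (Sum.inl (false, S))) ∈
        Finset.univ \ ({a, b} : Finset (Fin C)) := by
      simp [hK1a S, hne]
    exact hnopair _ heT false S rfl
  have hK2 : ∀ S : {S // S ∈ F}, c (Sum.inl (Sum.inl (true, S))) = a := by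
    intro S
    by_contra hne
    have heT : c (Sum.inl (Sum.inl (true, S))) ∈
        Finset.univ \ ({a, b} : Finset (Fin C)) := by
      simp [hK2b S, hne]
    exact hnopair _ heT true S rfl
  refine ⟨b, a, Ne.symm hab, hK1, hK2, ?_⟩
  intro e heb hea
  have heT : e ∈ Finset.univ \ ({a, b} : Finset (Fin C)) := by
    simp [hea, heb]
  have h1 := hKseq e heT
  have h2 := hKeq e heT
  have hset : {v : Fin ((C - 2) * (F.card + 2)) | c (Sum.inl (Sum.inr v)) = e}
      = ↑(Finset.univ.filter fun v : Fin ((C - 2) * (F.card + 2)) =>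
          c (Sum.inl (Sum.inr v)) = e) := by
    ext v; simp
  rw [hset, Set.ncard_coe_finset]
  simp only [cnt] at h1 h2
  omega
end
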